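/- arXiv:2204.00647 — 11 statements merged into one kernel-verified Lean document; each statement's English description precedes it below -/
import Mathlib

section
/- Let n ≥ 1, L > 0, μ ≤ 0, and let f : ℝⁿ → ℝ belong to F_{μ,L}. Assume f⋆ = inf f is finite and that f satisfies the PL inequality with constant μ_p, with 0 < μ_p ≤ L, on the sublevel set X = {x : f(x) ≤ f(x¹)} of a point x¹ ∈ ℝⁿ. Let t₁ ∈ (0, 1/L) and x² = x¹ − t₁∇f(x¹). Then f(x²) − f⋆ ≤ [ (μ_p(1 − L t₁) + √((L − μ)(μ − μ_p)(2 − L t₁)μ_p t₁ + (L − μ)²)) / (L − μ + μ_p) ]² · (f(x¹) − f⋆). -/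
open Set
open scoped RealInnerProductSpace

/-!
Write g₁ = ∇f(x¹) and g₂ = ∇f(x²), so that x¹ − x² = t₁ g₁. Evaluating the upper quadratic bound
at x¹ and the lower one at x² in the point x¹ − (L − μ)⁻¹(g₁ − g₂ − μ(x¹ − x²)) gives the
interpolation inequality of F_{μ,L} between x¹ and x², a quadratic relation between g₁, g₂,
f(x¹) − f⋆ and f(x²) − f⋆. The step does not increase f, so PL holds at both points.
With σ the square root in the rate, N = μ_p(1 − L t₁) + σ and D = L − μ + μ_p, the quantity
2μ_pσ(N²(f(x¹) − f⋆) − D²(f(x²) − f⋆)) is, modulo σ² = radicand, the combination of the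
interpolation inequality, the two PL inequalities and ‖N g₁ − D g₂‖² ≥ 0 with multipliers
μ_p N D, N((L − μ)D − σN), D(σD − (L − μ)N) and μ_p(1 − L t₁). These are nonnegative because
(L − μ)(1 − L t₁) ≤ σ ≤ L − μ.
-/

theorem ConvexOn.add_le_of_hasFDerivAt {E : Type*} [NormedAddCommGroup E] [NormedSpace ℝ E]
    {s : Set E} {g : E → ℝ} {g' : E →L[ℝ] ℝ} {x y : E} (hg : ConvexOn ℝ s g) (hx : x ∈ s)
    (hy : y ∈ s) (hd : HasFDerivAt g g' x) : g x + g' (y - x) ≤ g y := by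
  have hline : HasDerivAt (g ∘ AffineMap.lineMap (k := ℝ) x y) (g' (y - x)) 0 := by
    refine hd.comp_hasDerivAt_of_eq 0 AffineMap.hasDerivAt_lineMap ?_
    simp
  have := (hg.comp_affineMap (AffineMap.lineMap (k := ℝ) x y)).le_slope_of_hasDerivAt
    (by simpa using hx) (by simpa using hy) one_pos hline
  simp only [slope_def_field, Function.comp_apply, AffineMap.lineMap_apply_zero,
    AffineMap.lineMap_apply_one, sub_zero, div_one] at this
  linarith

section Hilbert

variable {E : Type*} [NormedAddCommGroup E] [InnerProductSpace ℝ E] [CompleteSpace E]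
  {f : E → ℝ} {f' : E → E}

theorem add_inner_add_sq_le_of_convexOn_sub_sq {c : ℝ} (hf : ∀ x, HasGradientAt f (f' x) x)
    (hc : ConvexOn ℝ univ fun x => f x - c / 2 * ‖x‖ ^ 2) (a b : E) :
    f a + ⟪f' a, b - a⟫ + c / 2 * ‖b - a‖ ^ 2 ≤ f b := by
  have hd := (hasGradientAt_iff_hasFDerivAt.mp (hf a)).sub
    ((hasStrictFDerivAt_norm_sq a).hasFDerivAt.const_mul (c / 2))
  have := hc.add_le_of_hasFDerivAt (mem_univ a) (mem_univ b) hd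
  simp only [sub_apply, smul_apply, InnerProductSpace.toDual_apply_apply, innerSL_apply_apply,
    smul_eq_mul, nsmul_eq_mul, Nat.cast_ofNat, inner_sub_right, real_inner_self_eq_norm_sq] at this
  rw [norm_sub_sq_real, inner_sub_right, real_inner_comm a b]
  linear_combination this

theorem le_add_inner_add_sq_of_convexOn_sq_sub {L : ℝ} (hf : ∀ x, HasGradientAt f (f' x) x)
    (hc : ConvexOn ℝ univ fun x => L / 2 * ‖x‖ ^ 2 - f x) (a b : E) :
    f b ≤ f a + ⟪f' a, b - a⟫ + L / 2 * ‖b - a‖ ^ 2 := by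
  have hneg (x : E) : HasGradientAt (-f) (-f' x) x := by
    rw [hasGradientAt_iff_hasFDerivAt, map_neg]
    exact (hasGradientAt_iff_hasFDerivAt.mp (hf x)).neg
  have := add_inner_add_sq_le_of_convexOn_sub_sq (c := -L) hneg
    (by convert hc using 2; simp only [Pi.neg_apply]; ring) a b
  simp only [Pi.neg_apply, inner_neg_left] at this
  linarith

theorem add_inner_add_sq_add_sq_le_of_convexOn {L μ : ℝ} (hf : ∀ x, HasGradientAt f (f' x) x)
    (hupper : ConvexOn ℝ univ fun x => L / 2 * ‖x‖ ^ 2 - f x)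
    (hlower : ConvexOn ℝ univ fun x => f x - μ / 2 * ‖x‖ ^ 2) (hμL : μ < L) (u v : E) :
    f v + ⟪f' v, u - v⟫ + μ / 2 * ‖u - v‖ ^ 2
      + 1 / (2 * (L - μ)) * ‖f' u - f' v - μ • (u - v)‖ ^ 2 ≤ f u := by
  set w := f' u - f' v - μ • (u - v) with hw
  set k := (L - μ)⁻¹
  have hk : (L - μ) * k = 1 := mul_inv_cancel₀ (sub_pos.mpr hμL).ne'
  have hup := le_add_inner_add_sq_of_convexOn_sq_sub hf hupper u (u - k • w)
  have hlow := add_inner_add_sq_le_of_convexOn_sub_sq hf hlower v (u - k • w)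
  have hww : ⟪f' u, w⟫ - ⟪f' v, w⟫ - μ * ⟪u - v, w⟫ = ‖w‖ ^ 2 := by
    rw [← real_inner_self_eq_norm_sq, hw]
    simp only [inner_sub_left, real_inner_smul_left]
  rw [sub_sub_cancel_left, inner_neg_right, norm_neg, real_inner_smul_right, norm_smul,
    Real.norm_eq_abs, mul_pow, sq_abs] at hup
  rw [sub_right_comm, inner_sub_right, real_inner_smul_right, norm_sub_sq_real,
    real_inner_smul_right, norm_smul, Real.norm_eq_abs, mul_pow, sq_abs] at hlow
  rw [show 1 / (2 * (L - μ)) = k / 2 by rw [one_div, mul_inv]; ring]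
  linear_combination hup + hlow - k * hww + k * ‖w‖ ^ 2 / 2 * hk

theorem apply_sub_smul_gradient_le {L t : ℝ} (hf : ∀ x, HasGradientAt f (f' x) x)
    (hupper : ConvexOn ℝ univ fun x => L / 2 * ‖x‖ ^ 2 - f x) (ht : 0 ≤ t) (hLt : L * t ≤ 2)
    (x : E) : f (x - t • f' x) ≤ f x := by
  have h := le_add_inner_add_sq_of_convexOn_sq_sub hf hupper x (x - t • f' x)
  rw [sub_sub_cancel_left, inner_neg_right, norm_neg, real_inner_smul_right, norm_smul,
    Real.norm_eq_abs, mul_pow, sq_abs, real_inner_self_eq_norm_sq] at h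
  nlinarith [mul_nonneg (mul_nonneg ht (sq_nonneg ‖f' x‖)) (sub_nonneg.mpr hLt)]

end Hilbert

theorem sq_le_pl_radicand_le_sq {L μ μp t : ℝ} (hμ : μ ≤ μp) (hμp : 0 ≤ μp) (hμpL : μp ≤ L)
    (ht : 0 ≤ t) (hLt : L * t ≤ 2) :
    ((L - μ) * (1 - L * t)) ^ 2 ≤ (L - μ) * (μ - μp) * (2 - L * t) * μp * t + (L - μ) ^ 2 ∧
      (L - μ) * (μ - μp) * (2 - L * t) * μp * t + (L - μ) ^ 2 ≤ (L - μ) ^ 2 := by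
  have hE : 0 ≤ L - μ := by linarith
  have h2Lt : 0 ≤ 2 - L * t := by linarith
  constructor
  · have hgap : 0 ≤ (L - μ) * L - (μp - μ) * μp := by
      nlinarith [mul_le_mul hμpL (sub_le_sub_right hμpL μ) (sub_nonneg.mpr hμ) (hμp.trans hμpL)]
    linear_combination mul_nonneg (mul_nonneg (mul_nonneg hE h2Lt) ht) hgap
  · linear_combination mul_nonneg (mul_nonneg (mul_nonneg (mul_nonneg hE (sub_nonneg.mpr hμ))
      h2Lt) hμp) ht

section Certificate

variable {F : Type*} [NormedAddCommGroup F] [InnerProductSpace ℝ F]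

theorem le_sq_pl_rate_mul {L μ μp t a b : ℝ} (hμ : μ < μp) (hμp : 0 < μp) (hμpL : μp ≤ L)
    (ht : 0 ≤ t) (hLt : L * t < 1) (g₁ g₂ : F)
    (hinterp : b + ⟪g₂, t • g₁⟫ + μ / 2 * ‖t • g₁‖ ^ 2
      + 1 / (2 * (L - μ)) * ‖g₁ - g₂ - μ • t • g₁‖ ^ 2 ≤ a)
    (hPL₁ : a ≤ 1 / (2 * μp) * ‖g₁‖ ^ 2) (hPL₂ : b ≤ 1 / (2 * μp) * ‖g₂‖ ^ 2) :
    b ≤ ((μp * (1 - L * t) +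
        Real.sqrt ((L - μ) * (μ - μp) * (2 - L * t) * μp * t + (L - μ) ^ 2)) /
          (L - μ + μp)) ^ 2 * a := by
  have hE : 0 < L - μ := by linarith
  obtain ⟨hRlow, hRup⟩ := sq_le_pl_radicand_le_sq hμ.le hμp.le hμpL ht (by linarith)
  set σ := Real.sqrt ((L - μ) * (μ - μp) * (2 - L * t) * μp * t + (L - μ) ^ 2)
  have hσsq : σ ^ 2 = (L - μ) * (μ - μp) * (2 - L * t) * μp * t + (L - μ) ^ 2 :=
    Real.sq_sqrt ((sq_nonneg _).trans hRlow)
  have hσlow : (L - μ) * (1 - L * t) ≤ σ := Real.le_sqrt_of_sq_le hRlow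
  have hσup : σ ≤ L - μ := Real.sqrt_le_iff.mpr ⟨hE.le, hRup⟩
  have hσpos : 0 < σ := (mul_pos hE (by linarith)).trans_le hσlow
  set N := μp * (1 - L * t) + σ
  set D := L - μ + μp
  have hN : 0 ≤ N := by nlinarith
  have hD : 0 < D := by linarith
  have hσN : σ * N ≤ (L - μ) * D := by nlinarith
  have hEN : (L - μ) * N ≤ σ * D := by nlinarith
  set s₁ := ‖g₁‖ ^ 2
  set s₂ := ‖g₂‖ ^ 2
  set s₁₂ := ⟪g₁, g₂⟫
  set Q := (1 - μ * t) ^ 2 * s₁ - 2 * ((1 - μ * t) * s₁₂) + s₂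
  have hQ : ‖g₁ - g₂ - μ • t • g₁‖ ^ 2 = Q := by
    rw [show g₁ - g₂ - μ • t • g₁ = (1 - μ * t) • g₁ - g₂ by module, norm_sub_sq_real,
      real_inner_smul_left, norm_smul, Real.norm_eq_abs, mul_pow, sq_abs]
  have hres : 0 ≤ N ^ 2 * s₁ - 2 * (N * D) * s₁₂ + D ^ 2 * s₂ := by
    have h := sq_nonneg ‖N • g₁ - D • g₂‖
    rw [norm_sub_sq_real, real_inner_smul_left, real_inner_smul_right, norm_smul, norm_smul,
      Real.norm_eq_abs, Real.norm_eq_abs, mul_pow, mul_pow, sq_abs, sq_abs] at h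
    linear_combination h
  rw [real_inner_smul_right, real_inner_comm, norm_smul, Real.norm_eq_abs, mul_pow, sq_abs,
    hQ] at hinterp
  have hI : 0 ≤ 2 * (L - μ) * (a - b - t * s₁₂ - μ / 2 * (t ^ 2 * s₁)) - Q := by
    have : 1 / (2 * (L - μ)) * Q ≤ a - b - t * s₁₂ - μ / 2 * (t ^ 2 * s₁) := by linarith
    rw [one_div_mul_eq_div, div_le_iff₀ (by positivity)] at this
    linarith
  have hP₁ : 0 ≤ s₁ - 2 * μp * a := by
    rw [one_div_mul_eq_div, le_div_iff₀ (by positivity)] at hPL₁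
    linarith
  have hP₂ : 0 ≤ s₂ - 2 * μp * b := by
    rw [one_div_mul_eq_div, le_div_iff₀ (by positivity)] at hPL₂
    linarith
  have key : 0 ≤ 2 * μp * σ * (N ^ 2 * a - D ^ 2 * b) := by
    linear_combination μp * N * D * hI + N * ((L - μ) * D - σ * N) * hP₁
      + D * (σ * D - (L - μ) * N) * hP₂ + μp * (1 - L * t) * hres - N * s₁ * hσsq
  have hND : D ^ 2 * b ≤ N ^ 2 * a := by
    have := nonneg_of_mul_nonneg_right key (by positivity)
    linarith
  rwa [div_pow, div_mul_eq_mul_div, le_div_iff₀ (by positivity), mul_comm]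

end Certificate

theorem stmt_0_general (n : ℕ)
    (f : EuclideanSpace ℝ (Fin n) → ℝ)
    (f' : EuclideanSpace ℝ (Fin n) → EuclideanSpace ℝ (Fin n))
    (L μ : ℝ) (hμ : μ ≤ 0)
    (hgrad : ∀ x, HasGradientAt f (f' x) x)
    (hupper : ConvexOn ℝ univ (fun x => L / 2 * ‖x‖ ^ 2 - f x))
    (hlower : ConvexOn ℝ univ (fun x => f x - μ / 2 * ‖x‖ ^ 2))
    (fstar : ℝ)
    (μp : ℝ) (hμp : 0 < μp) (hμpL : μp ≤ L)
    (x1 : EuclideanSpace ℝ (Fin n))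
    (hPL : ∀ x, f x ≤ f x1 → f x - fstar ≤ 1 / (2 * μp) * ‖f' x‖ ^ 2)
    (t1 : ℝ) (ht1 : t1 ∈ Ioo 0 (1 / L))
    (x2 : EuclideanSpace ℝ (Fin n)) (hx2 : x2 = x1 - t1 • f' x1) :
    f x2 - fstar ≤
      ((μp * (1 - L * t1) +
          Real.sqrt ((L - μ) * (μ - μp) * (2 - L * t1) * μp * t1 + (L - μ) ^ 2)) /
            (L - μ + μp)) ^ 2 * (f x1 - fstar) := by
  have hμμp : μ < μp := hμ.trans_lt hμp
  have hLt1 : L * t1 < 1 := (lt_div_iff₀' (hμp.trans_le hμpL)).mp ht1.2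
  have hdesc : f x2 ≤ f x1 :=
    hx2 ▸ apply_sub_smul_gradient_le hgrad hupper ht1.1.le (by linarith) x1
  have hinterp := add_inner_add_sq_add_sq_le_of_convexOn hgrad hupper hlower
    (hμμp.trans_le hμpL) x1 x2
  rw [show x1 - x2 = t1 • f' x1 by rw [hx2, sub_sub_cancel]] at hinterp
  exact le_sq_pl_rate_mul hμμp hμp hμpL ht1.1.le hLt1 (f' x1) (f' x2) (by linarith)
    (hPL x1 le_rfl) (hPL x2 hdesc)

theorem stmt_0 (n : ℕ) (hn : 1 ≤ n)
    (f : EuclideanSpace ℝ (Fin n) → ℝ)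
    (f' : EuclideanSpace ℝ (Fin n) → EuclideanSpace ℝ (Fin n))
    (L μ : ℝ) (hL : 0 < L) (hμ : μ ≤ 0)
    (hgrad : ∀ x, HasGradientAt f (f' x) x)
    (hupper : ConvexOn ℝ univ (fun x => L / 2 * ‖x‖ ^ 2 - f x))
    (hlower : ConvexOn ℝ univ (fun x => f x - μ / 2 * ‖x‖ ^ 2))
    (fstar : ℝ) (hfstar : IsGLB (range f) fstar)
    (μp : ℝ) (hμp : 0 < μp) (hμpL : μp ≤ L)
    (x1 : EuclideanSpace ℝ (Fin n))
    (hPL : ∀ x, f x ≤ f x1 → f x - fstar ≤ 1 / (2 * μp) * ‖f' x‖ ^ 2)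
    (t1 : ℝ) (ht1 : t1 ∈ Ioo 0 (1 / L))
    (x2 : EuclideanSpace ℝ (Fin n)) (hx2 : x2 = x1 - t1 • f' x1) :
    f x2 - fstar ≤
      ((μp * (1 - L * t1) +
          Real.sqrt ((L - μ) * (μ - μp) * (2 - L * t1) * μp * t1 + (L - μ) ^ 2)) /
            (L - μ + μp)) ^ 2 * (f x1 - fstar) :=
  stmt_0_general n f f' L μ hμ hgrad hupper hlower fstar μp hμp hμpL x1 hPL t1 ht1 x2 hx2
end

section
/- Let n ≥ 1, L > 0, μ ≤ 0, and let f : ℝⁿ → ℝ belong to F_{μ,L}. Assume f⋆ = inf f is finite and that f satisfies the PL inequality with constant μ_p, with 0 < μ_p ≤ L, on the sublevel set X = {x : f(x) ≤ f(x¹)} of a point x¹ ∈ ℝⁿ. Let t₁ ∈ [1/L, 3/(μ + L + √(μ² − Lμ + L²))] and x² = x¹ − t₁∇f(x¹). Then f(x²) − f⋆ ≤ ( ((L t₁ − 2)(μ t₁ − 2)μ_p t₁) / ((L + μ − μ_p)t₁ − 2) + 1 ) · (f(x¹) − f⋆). -/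
/-!
Interpolating the class `F_{μ,L}` between `x¹` and `x²` in both directions (the interpolation
inequality comes from the convex, `(L - μ)`-smooth function `f - μ/2 ‖·‖²`) and applying the PL
inequality at `x¹` and at `x²` (which stays in the sublevel set because `L t₁ ≤ 2`) gives four
scalar inequalities in `f(x¹), f(x²), ‖∇f(x¹)‖², ⟪∇f(x²), ∇f(x¹)⟫, ‖∇f(x²)‖²`. The rate is their
combination with multipliers `L t₁ - 1`, `1 - μ t₁`, `μ_p t₁ q(t₁)` and `μ_p t₁`, where
`q(t) = μ L t² - 2 (L + μ) t + 3`; the upper bound on `t₁` is exactly what makes `q(t₁) ≥ 0`.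
-/

open Set
open scoped RealInnerProductSpace

section Smooth

variable {F : Type*} [NormedAddCommGroup F] [InnerProductSpace ℝ F] [CompleteSpace F]
  {φ : F → ℝ} {φ' : F → F} {g x : F}

theorem hasGradientAt_norm_sq (x : F) : HasGradientAt (fun x => ‖x‖ ^ 2) ((2 : ℝ) • x) x := by
  rw [hasGradientAt_iff_hasFDerivAt]
  refine (hasStrictFDerivAt_norm_sq x).hasFDerivAt.congr_fderiv ?_
  ext v
  simp [InnerProductSpace.toDual_apply_apply, two_smul]

theorem HasGradientAt.sub_half_mul_norm_sq (hφ : HasGradientAt φ g x) (c : ℝ) :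
    HasGradientAt (fun z => φ z - c / 2 * ‖z‖ ^ 2) (g - c • x) x := by
  rw [hasGradientAt_iff_hasFDerivAt]
  refine (hφ.hasFDerivAt.sub
    ((hasGradientAt_norm_sq x).hasFDerivAt.const_mul (c / 2))).congr_fderiv ?_
  ext v
  simp [InnerProductSpace.toDual_apply_apply]
  ring

theorem HasGradientAt.half_mul_norm_sq_sub (hφ : HasGradientAt φ g x) (c : ℝ) :
    HasGradientAt (fun z => c / 2 * ‖z‖ ^ 2 - φ z) (c • x - g) x := by
  rw [hasGradientAt_iff_hasFDerivAt]
  refine (((hasGradientAt_norm_sq x).hasFDerivAt.const_mul (c / 2)).sub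
    hφ.hasFDerivAt).congr_fderiv ?_
  ext v
  simp [InnerProductSpace.toDual_apply_apply]
  ring

theorem ConvexOn.add_inner_le_of_hasGradientAt (hc : ConvexOn ℝ univ φ)
    (hφ : HasGradientAt φ g x) (y : F) : φ x + ⟪g, y - x⟫ ≤ φ y := by
  have hline : ConvexOn ℝ univ (φ ∘ AffineMap.lineMap (k := ℝ) x y) := by
    simpa using hc.comp_affineMap (AffineMap.lineMap x y)
  have hderiv : HasDerivAt (φ ∘ AffineMap.lineMap (k := ℝ) x y) ⟪g, y - x⟫ 0 := by
    have := hφ.hasFDerivAt.comp_hasDerivAt_of_eq (0 : ℝ) AffineMap.hasDerivAt_lineMap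
      (AffineMap.lineMap_apply_zero x y).symm
    simpa [InnerProductSpace.toDual_apply_apply] using this
  have := hline.le_slope_of_hasDerivAt (mem_univ 0) (mem_univ 1) one_pos hderiv
  simp [slope_def_field] at this
  linarith

theorem le_add_inner_add_sq_of_convexOn_sq_sub_s1 {K : ℝ}
    (hsm : ConvexOn ℝ univ (fun z => K / 2 * ‖z‖ ^ 2 - φ z)) (hφ : HasGradientAt φ g x) (y : F) :
    φ y ≤ φ x + ⟪g, y - x⟫ + K / 2 * ‖y - x‖ ^ 2 := by
  have h := hsm.add_inner_le_of_hasGradientAt (hφ.half_mul_norm_sq_sub K) y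
  have hsq : ‖y‖ ^ 2 = ‖x‖ ^ 2 + 2 * ⟪x, y - x⟫ + ‖y - x‖ ^ 2 := by
    simpa using norm_add_sq_real x (y - x)
  rw [inner_sub_left, real_inner_smul_left] at h
  linear_combination h + K / 2 * hsq

theorem le_of_gradient_step {K t : ℝ}
    (hsm : ConvexOn ℝ univ (fun z => K / 2 * ‖z‖ ^ 2 - φ z)) (hφ : HasGradientAt φ g x)
    (ht : 0 ≤ t) (hKt : K * t ≤ 2) : φ (x - t • g) ≤ φ x := by
  have h := le_add_inner_add_sq_of_convexOn_sq_sub_s1 hsm hφ (x - t • g)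
  rw [sub_sub_cancel_left, inner_neg_right, real_inner_smul_right, real_inner_self_eq_norm_sq,
    norm_neg, norm_smul, mul_pow, Real.norm_eq_abs, sq_abs] at h
  nlinarith [mul_nonneg (mul_nonneg ht (sq_nonneg ‖g‖)) (sub_nonneg.2 hKt)]

theorem ConvexOn.add_inner_add_norm_sq_div_le {K : ℝ} (hK : 0 < K) (hc : ConvexOn ℝ univ φ)
    (hsm : ConvexOn ℝ univ (fun z => K / 2 * ‖z‖ ^ 2 - φ z))
    (hφ : ∀ z, HasGradientAt φ (φ' z) z) (x y : F) :
    φ y + ⟪φ' y, x - y⟫ + ‖φ' x - φ' y‖ ^ 2 / (2 * K) ≤ φ x := by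
  set d := φ' x - φ' y
  -- `x - K⁻¹ • d` is the gradient step from `x` for `φ - ⟪φ' y, ·⟫`, which is minimised at `y`
  have hlow := hc.add_inner_le_of_hasGradientAt (hφ y) (x - K⁻¹ • d)
  have hup := le_add_inner_add_sq_of_convexOn_sq_sub_s1 hsm (hφ x) (x - K⁻¹ • d)
  rw [sub_right_comm, inner_sub_right, real_inner_smul_right] at hlow
  rw [sub_sub_cancel_left, inner_neg_right, real_inner_smul_right, norm_neg, norm_smul, mul_pow,
    Real.norm_eq_abs, sq_abs] at hup
  have hd : ⟪φ' x, d⟫ - ⟪φ' y, d⟫ = ‖d‖ ^ 2 := by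
    rw [← inner_sub_left, real_inner_self_eq_norm_sq]
  have hcancel :
      ‖d‖ ^ 2 / (2 * K) = K⁻¹ * (⟪φ' x, d⟫ - ⟪φ' y, d⟫) - K / 2 * (K⁻¹ ^ 2 * ‖d‖ ^ 2) := by
    rw [hd]
    field_simp
    ring
  linarith

theorem add_inner_add_sq_add_norm_sq_div_le_of_convexOn {L μ : ℝ} (hμL : μ < L)
    (hupper : ConvexOn ℝ univ (fun z => L / 2 * ‖z‖ ^ 2 - φ z))
    (hlower : ConvexOn ℝ univ (fun z => φ z - μ / 2 * ‖z‖ ^ 2))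
    (hφ : ∀ z, HasGradientAt φ (φ' z) z) (x y : F) :
    φ y + ⟪φ' y, x - y⟫ + μ / 2 * ‖x - y‖ ^ 2 + ‖φ' x - φ' y - μ • (x - y)‖ ^ 2 / (2 * (L - μ))
      ≤ φ x := by
  have hsm : ConvexOn ℝ univ (fun z => (L - μ) / 2 * ‖z‖ ^ 2 - (φ z - μ / 2 * ‖z‖ ^ 2)) := by
    convert hupper using 2
    ring
  have h := hlower.add_inner_add_norm_sq_div_le (sub_pos.2 hμL) hsm
    (fun z => (hφ z).sub_half_mul_norm_sq μ) x y
  rw [show φ' x - μ • x - (φ' y - μ • y) = φ' x - φ' y - μ • (x - y) by module,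
    inner_sub_left, real_inner_smul_left] at h
  have hsq : ‖x‖ ^ 2 = ‖y‖ ^ 2 + 2 * ⟪y, x - y⟫ + ‖x - y‖ ^ 2 := by
    simpa using norm_add_sq_real y (x - y)
  linear_combination h - μ / 2 * hsq

theorem interpolation_gradient_step {L μ : ℝ} (hμL : μ < L)
    (hupper : ConvexOn ℝ univ (fun z => L / 2 * ‖z‖ ^ 2 - φ z))
    (hlower : ConvexOn ℝ univ (fun z => φ z - μ / 2 * ‖z‖ ^ 2))
    (hφ : ∀ z, HasGradientAt φ (φ' z) z) (x : F) (t : ℝ) :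
    φ x - t * ‖φ' x‖ ^ 2 + μ / 2 * t ^ 2 * ‖φ' x‖ ^ 2 +
        (‖φ' (x - t • φ' x)‖ ^ 2 - 2 * (1 - μ * t) * ⟪φ' (x - t • φ' x), φ' x⟫ +
          (1 - μ * t) ^ 2 * ‖φ' x‖ ^ 2) / (2 * (L - μ)) ≤ φ (x - t • φ' x) ∧
      φ (x - t • φ' x) + t * ⟪φ' (x - t • φ' x), φ' x⟫ + μ / 2 * t ^ 2 * ‖φ' x‖ ^ 2 +
        (‖φ' (x - t • φ' x)‖ ^ 2 - 2 * (1 - μ * t) * ⟪φ' (x - t • φ' x), φ' x⟫ +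
          (1 - μ * t) ^ 2 * ‖φ' x‖ ^ 2) / (2 * (L - μ)) ≤ φ x := by
  set x' := x - t • φ' x
  have hN : ‖φ' x' - (1 - μ * t) • φ' x‖ ^ 2 = ‖φ' x'‖ ^ 2 - 2 * (1 - μ * t) * ⟪φ' x', φ' x⟫ +
      (1 - μ * t) ^ 2 * ‖φ' x‖ ^ 2 := by
    rw [norm_sub_sq_real, real_inner_smul_right, norm_smul, mul_pow, Real.norm_eq_abs, sq_abs]
    ring
  have hstep : ‖x' - x‖ ^ 2 = t ^ 2 * ‖φ' x‖ ^ 2 := by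
    rw [sub_sub_cancel_left, norm_neg, norm_smul, mul_pow, Real.norm_eq_abs, sq_abs]
  constructor
  · have h := add_inner_add_sq_add_norm_sq_div_le_of_convexOn hμL hupper hlower hφ x' x
    rw [show φ' x' - φ' x - μ • (x' - x) = φ' x' - (1 - μ * t) • φ' x by module, hN, hstep,
      sub_sub_cancel_left, inner_neg_right, real_inner_smul_right, real_inner_self_eq_norm_sq] at h
    linarith
  · have h := add_inner_add_sq_add_norm_sq_div_le_of_convexOn hμL hupper hlower hφ x x'
    rw [show φ' x - φ' x' - μ • (x - x') = -(φ' x' - (1 - μ * t) • φ' x) by module, norm_neg,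
      hN, ← norm_neg, neg_sub, hstep, sub_sub_cancel, real_inner_smul_right] at h
    linarith

end Smooth

theorem stepSize_bounds {L μ t : ℝ} (hL : 0 < L) (hμ : μ ≤ 0)
    (ht : t ∈ Icc (1 / L) (3 / (μ + L + Real.sqrt (μ ^ 2 - L * μ + L ^ 2)))) :
    1 ≤ L * t ∧ L * t ≤ 2 ∧ 0 ≤ μ * L * t ^ 2 - 2 * (L + μ) * t + 3 := by
  obtain ⟨htl, htu⟩ := ht
  set R := Real.sqrt (μ ^ 2 - L * μ + L ^ 2)
  have hR : R ^ 2 = μ ^ 2 - L * μ + L ^ 2 := Real.sq_sqrt (by nlinarith)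
  have hRge : L / 2 - μ ≤ R := Real.le_sqrt_of_sq_le (by nlinarith)
  rw [div_le_iff₀ hL] at htl
  rw [le_div_iff₀ (by linarith)] at htu
  have ht : 0 ≤ t := by nlinarith
  refine ⟨by linarith, by nlinarith, ?_⟩
  -- `μ + L ± R` have sum `2 (L + μ)` and product `3 μ L`, so they factor `3 q(t)`
  have hq : 3 * (μ * L * t ^ 2 - 2 * (L + μ) * t + 3) =
      (3 - t * (μ + L + R)) * (3 - t * (μ + L - R)) := by
    linear_combination t ^ 2 * hR
  have hsecond : 0 ≤ 3 - t * (μ + L - R) := by nlinarith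
  nlinarith [mul_nonneg (sub_nonneg.2 htu) hsecond]

theorem pl_rate_of_interpolation {L μ μp t a b c f₁ f₂ fstar : ℝ} (hL : 0 < L) (hμ : μ ≤ 0)
    (hμp : 0 < μp) (hLt : 1 ≤ L * t) (hLt₂ : L * t ≤ 2)
    (hq : 0 ≤ μ * L * t ^ 2 - 2 * (L + μ) * t + 3)
    (h₁ : f₁ - t * a + μ / 2 * t ^ 2 * a +
      (c - 2 * (1 - μ * t) * b + (1 - μ * t) ^ 2 * a) / (2 * (L - μ)) ≤ f₂)
    (h₂ : f₂ + t * b + μ / 2 * t ^ 2 * a +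
      (c - 2 * (1 - μ * t) * b + (1 - μ * t) ^ 2 * a) / (2 * (L - μ)) ≤ f₁)
    (hPL₁ : f₁ - fstar ≤ 1 / (2 * μp) * a) (hPL₂ : f₂ - fstar ≤ 1 / (2 * μp) * c) :
    f₂ - fstar ≤
      ((L * t - 2) * (μ * t - 2) * μp * t / ((L + μ - μp) * t - 2) + 1) * (f₁ - fstar) := by
  have ht : 0 < t := by nlinarith
  have hμt : 0 ≤ 1 - μ * t := by nlinarith
  set N := c - 2 * (1 - μ * t) * b + (1 - μ * t) ^ 2 * a
  have hN : 2 * (L - μ) * (N / (2 * (L - μ))) = N := mul_div_cancel₀ _ (by linarith)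
  rw [one_div, inv_mul_eq_div, le_div_iff₀' (by positivity)] at hPL₁ hPL₂
  have hrate : (2 + μp * t - L * t - μ * t) * (f₂ - fstar) ≤
      (2 + μp * t - L * t - μ * t - μp * t * (L * t - 2) * (μ * t - 2)) * (f₁ - fstar) := by
    linear_combination mul_le_mul_of_nonneg_left h₁ (sub_nonneg.2 hLt)
      + mul_le_mul_of_nonneg_left h₂ hμt
      + mul_le_mul_of_nonneg_left hPL₁ (mul_nonneg ht.le hq) / 2
      + mul_le_mul_of_nonneg_left hPL₂ ht.le / 2 - t / 2 * hN
  have hden : (L + μ - μp) * t - 2 < 0 := by nlinarith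
  rw [div_add_one hden.ne, div_mul_eq_mul_div, le_div_iff_of_neg hden]
  linarith

theorem stmt_1_general (n : ℕ)
    (f : EuclideanSpace ℝ (Fin n) → ℝ)
    (f' : EuclideanSpace ℝ (Fin n) → EuclideanSpace ℝ (Fin n))
    (L μ : ℝ) (hL : 0 < L) (hμ : μ ≤ 0)
    (hgrad : ∀ x, HasGradientAt f (f' x) x)
    (hupper : ConvexOn ℝ univ (fun x => L / 2 * ‖x‖ ^ 2 - f x))
    (hlower : ConvexOn ℝ univ (fun x => f x - μ / 2 * ‖x‖ ^ 2))
    (fstar : ℝ)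
    (μp : ℝ) (hμp : 0 < μp)
    (x1 : EuclideanSpace ℝ (Fin n))
    (hPL : ∀ x, f x ≤ f x1 → f x - fstar ≤ 1 / (2 * μp) * ‖f' x‖ ^ 2)
    (t1 : ℝ)
    (ht1 : t1 ∈ Icc (1 / L) (3 / (μ + L + Real.sqrt (μ ^ 2 - L * μ + L ^ 2))))
    (x2 : EuclideanSpace ℝ (Fin n)) (hx2 : x2 = x1 - t1 • f' x1) :
    f x2 - fstar ≤
      ((L * t1 - 2) * (μ * t1 - 2) * μp * t1 / ((L + μ - μp) * t1 - 2) + 1) *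
        (f x1 - fstar) := by
  subst hx2
  obtain ⟨hLt, hLt₂, hq⟩ := stepSize_bounds hL hμ ht1
  have ht1_pos : 0 < t1 := lt_of_lt_of_le (by positivity) ht1.1
  obtain ⟨h₁, h₂⟩ := interpolation_gradient_step (by linarith) hupper hlower hgrad x1 t1
  have hdesc := le_of_gradient_step hupper (hgrad x1) ht1_pos.le hLt₂
  exact pl_rate_of_interpolation hL hμ hμp hLt hLt₂ hq h₁ h₂ (hPL x1 le_rfl) (hPL _ hdesc)

theorem stmt_1 (n : ℕ) (hn : 1 ≤ n)
    (f : EuclideanSpace ℝ (Fin n) → ℝ)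
    (f' : EuclideanSpace ℝ (Fin n) → EuclideanSpace ℝ (Fin n))
    (L μ : ℝ) (hL : 0 < L) (hμ : μ ≤ 0)
    (hgrad : ∀ x, HasGradientAt f (f' x) x)
    (hupper : ConvexOn ℝ univ (fun x => L / 2 * ‖x‖ ^ 2 - f x))
    (hlower : ConvexOn ℝ univ (fun x => f x - μ / 2 * ‖x‖ ^ 2))
    (fstar : ℝ) (hfstar : IsGLB (range f) fstar)
    (μp : ℝ) (hμp : 0 < μp) (hμpL : μp ≤ L)
    (x1 : EuclideanSpace ℝ (Fin n))
    (hPL : ∀ x, f x ≤ f x1 → f x - fstar ≤ 1 / (2 * μp) * ‖f' x‖ ^ 2)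
    (t1 : ℝ)
    (ht1 : t1 ∈ Icc (1 / L) (3 / (μ + L + Real.sqrt (μ ^ 2 - L * μ + L ^ 2))))
    (x2 : EuclideanSpace ℝ (Fin n)) (hx2 : x2 = x1 - t1 • f' x1) :
    f x2 - fstar ≤
      ((L * t1 - 2) * (μ * t1 - 2) * μp * t1 / ((L + μ - μp) * t1 - 2) + 1) *
        (f x1 - fstar) :=
  stmt_1_general n f f' L μ hL hμ hgrad hupper hlower fstar μp hμp x1 hPL t1 ht1 x2 hx2
end

section
/- Let n ≥ 1, L > 0, μ ≤ 0, and let f : ℝⁿ → ℝ belong to F_{μ,L}. Assume f⋆ = inf f is finite and that f satisfies the PL inequality with constant μ_p, with 0 < μ_p ≤ L, on the sublevel set X = {x : f(x) ≤ f(x¹)} of a point x¹ ∈ ℝⁿ. Let t₁ ∈ (3/(μ + L + √(μ² − Lμ + L²)), 2/L) and x² = x¹ − t₁∇f(x¹). Then f(x²) − f⋆ ≤ ( (L t₁ − 1)² / ((L t₁ − 1)² + μ_p t₁(2 − L t₁)) ) · (f(x¹) − f⋆). -/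
/-!
The two convexity hypotheses give quadratic lower and upper bounds on `f`; comparing them at the
best intermediate point yields the interpolation inequality of `F_{μ,L}`. Apply it to the pairs
`(x¹, x²)` and `(x², x¹)`, add the PL inequality at `x²` (which lies in the sublevel set since a
step of length `t₁ < 2 / L` decreases `f`) and `0 ≤ ‖(L t₁ - 1) ∇f(x¹) + ∇f(x²)‖²`. With weights
`(L t₁ - 1)(2 - L t₁)`, `L t₁ - 1`, `t₁ (2 - L t₁)(L - μ)` and `2 (L + μ) t₁ - L μ t₁² - 3`, all
nonnegative, these sum to the claimed bound; the lower bound on `t₁` is exactly the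
nonnegativity of the last weight.
-/

open Set
open scoped RealInnerProductSpace

theorem ConvexOn.apply_add_le_of_hasFDerivAt {E : Type*} [NormedAddCommGroup E] [NormedSpace ℝ E]
    {φ : E → ℝ} {φ' : E →L[ℝ] ℝ} {x : E} (hφ : ConvexOn ℝ (univ : Set E) φ)
    (hx : HasFDerivAt φ φ' x) (y : E) : φ x + φ' (y - x) ≤ φ y := by
  have hline : ConvexOn ℝ univ (φ ∘ (AffineMap.lineMap x y : ℝ →ᵃ[ℝ] E)) := by
    simpa using hφ.comp_affineMap (AffineMap.lineMap x y)
  have hderiv : HasDerivAt (φ ∘ (AffineMap.lineMap x y : ℝ →ᵃ[ℝ] E)) (φ' (y - x)) 0 := by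
    simpa using hx.comp_hasDerivAt_of_eq (0 : ℝ) AffineMap.hasDerivAt_lineMap (by simp)
  have := hline.le_slope_of_hasDerivAt (mem_univ 0) (mem_univ 1) one_pos hderiv
  simp only [slope_def_field, Function.comp_apply, AffineMap.lineMap_apply_zero,
    AffineMap.lineMap_apply_one, sub_zero, div_one] at this
  linarith

theorem step_size_bounds {L μ t : ℝ} (hL : 0 < L) (hμ : μ ≤ 0)
    (ht : t ∈ Ioo (3 / (μ + L + √(μ ^ 2 - L * μ + L ^ 2))) (2 / L)) :
    0 < t ∧ 1 < L * t ∧ L * t < 2 ∧ 3 ≤ 2 * (L + μ) * t - L * μ * t ^ 2 := by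
  obtain ⟨hlo, hhi⟩ := ht
  set s := √(μ ^ 2 - L * μ + L ^ 2)
  have hs : s ^ 2 = μ ^ 2 - L * μ + L ^ 2 := Real.sq_sqrt (by nlinarith)
  have hμs : |μ| ≤ s := Real.abs_le_sqrt (by nlinarith)
  have hLμs : |L + μ| ≤ s := Real.abs_le_sqrt (by nlinarith)
  have hD : 0 < μ + L + s := by linarith [neg_abs_le μ]
  have ht : 0 < t := lt_trans (by positivity) hlo
  have htD : 3 < t * (μ + L + s) := by rw [div_lt_iff₀ hD] at hlo; linarith
  -- `3 / (μ + L + s)` is the positive root of `3 - 2 (L + μ) t + L μ t²`.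
  have hfactor : 2 * (L + μ) * t - L * μ * t ^ 2 - 3
      = (t * (μ + L + s) - 3) * (1 + t * (s - (L + μ)) / 3) := by
    linear_combination (-t ^ 2 / 3) * hs
  have hstep : 3 < 2 * (L + μ) * t - L * μ * t ^ 2 := by
    have := le_abs_self (L + μ)
    have : 0 < (t * (μ + L + s) - 3) * (1 + t * (s - (L + μ)) / 3) :=
      mul_pos (by linarith) (by nlinarith)
    linarith [hfactor]
  have hLt : L * t < 2 := by rw [lt_div_iff₀ hL] at hhi; linarith
  refine ⟨ht, ?_, hLt, hstep.le⟩
  linarith [mul_nonneg (mul_nonneg (neg_nonneg.mpr hμ) ht.le) (sub_nonneg.mpr hLt.le)]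

section
variable {E : Type*} [NormedAddCommGroup E] [InnerProductSpace ℝ E] [CompleteSpace E]
  {f : E → ℝ} {f' : E → E}

theorem lower_quadratic_bound {μ : ℝ} (hgrad : ∀ x, HasGradientAt f (f' x) x)
    (hconv : ConvexOn ℝ univ (fun x => f x - μ / 2 * ‖x‖ ^ 2)) (x y : E) :
    f x + ⟪f' x, y - x⟫ + μ / 2 * ‖y - x‖ ^ 2 ≤ f y := by
  have hderiv := (hgrad x).hasFDerivAt.sub
    ((hasStrictFDerivAt_norm_sq x).hasFDerivAt.const_mul (μ / 2))
  have := hconv.apply_add_le_of_hasFDerivAt hderiv y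
  simp only [sub_apply, smul_apply, coe_innerSL_apply,
    InnerProductSpace.toDual_apply_apply, real_inner_self_eq_norm_sq, nsmul_eq_mul, smul_eq_mul,
    inner_sub_right, norm_sub_sq_real, real_inner_comm x y] at this ⊢
  linarith

theorem upper_quadratic_bound {L : ℝ} (hgrad : ∀ x, HasGradientAt f (f' x) x)
    (hconv : ConvexOn ℝ univ (fun x => L / 2 * ‖x‖ ^ 2 - f x)) (x y : E) :
    f y ≤ f x + ⟪f' x, y - x⟫ + L / 2 * ‖y - x‖ ^ 2 := by
  have hderiv := ((hasStrictFDerivAt_norm_sq x).hasFDerivAt.const_mul (L / 2)).sub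
    (hgrad x).hasFDerivAt
  have := hconv.apply_add_le_of_hasFDerivAt hderiv y
  simp only [sub_apply, smul_apply, coe_innerSL_apply,
    InnerProductSpace.toDual_apply_apply, real_inner_self_eq_norm_sq, nsmul_eq_mul, smul_eq_mul,
    inner_sub_right, norm_sub_sq_real, real_inner_comm x y] at this ⊢
  linarith

theorem interpolation_inequality {L μ : ℝ} (hμL : μ < L) (hgrad : ∀ x, HasGradientAt f (f' x) x)
    (hupper : ConvexOn ℝ univ (fun x => L / 2 * ‖x‖ ^ 2 - f x))
    (hlower : ConvexOn ℝ univ (fun x => f x - μ / 2 * ‖x‖ ^ 2)) (x y : E) :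
    f x + ⟪f' x, y - x⟫ + μ / 2 * ‖y - x‖ ^ 2
      + ‖f' y - f' x - μ • (y - x)‖ ^ 2 / (2 * (L - μ)) ≤ f y := by
  set v := f' y - f' x - μ • (y - x)
  set w := (L - μ)⁻¹
  have hw : w * (L - μ) = 1 := inv_mul_cancel₀ (sub_ne_zero.mpr hμL.ne')
  have hv : ‖v‖ ^ 2 = ⟪f' y, v⟫ - ⟪f' x, v⟫ - μ * ⟪y - x, v⟫ := by
    rw [← real_inner_self_eq_norm_sq]
    change ⟪f' y - f' x - μ • (y - x), v⟫ = _
    simp only [inner_sub_left, real_inner_smul_left]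
  -- `y - w • v` minimises the gap between the two quadratic bounds on `f`.
  have h1 := lower_quadratic_bound hgrad hlower x (y - w • v)
  have h2 := upper_quadratic_bound hgrad hupper y (y - w • v)
  rw [show y - w • v - x = (y - x) - w • v by abel, norm_sub_sq_real, inner_sub_right,
    real_inner_smul_right, real_inner_smul_right, norm_smul, Real.norm_eq_abs, mul_pow,
    sq_abs] at h1
  rw [show y - w • v - y = -(w • v) by abel, norm_neg, inner_neg_right, real_inner_smul_right,
    norm_smul, Real.norm_eq_abs, mul_pow, sq_abs] at h2
  have hdiv : ‖v‖ ^ 2 / (2 * (L - μ)) = w * ‖v‖ ^ 2 / 2 := by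
    simp only [w]; field_simp
  rw [hdiv]
  have hsq : w ^ 2 * ‖v‖ ^ 2 * (L - μ) = w * ‖v‖ ^ 2 := by
    linear_combination (w * ‖v‖ ^ 2) * hw
  linarith [congrArg (w * ·) hv]

theorem gradient_step_le {L : ℝ} (hgrad : ∀ x, HasGradientAt f (f' x) x)
    (hupper : ConvexOn ℝ univ (fun x => L / 2 * ‖x‖ ^ 2 - f x)) {t : ℝ} (ht : 0 ≤ t)
    (htL : L * t ≤ 2) (x : E) : f (x - t • f' x) ≤ f x := by
  have h := upper_quadratic_bound hgrad hupper x (x - t • f' x)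
  rw [sub_sub_cancel_left, inner_neg_right, norm_neg, real_inner_smul_right,
    real_inner_self_eq_norm_sq, norm_smul, Real.norm_eq_abs, mul_pow, sq_abs] at h
  linarith [mul_nonneg (mul_nonneg ht (sub_nonneg.mpr htL)) (sq_nonneg ‖f' x‖)]

theorem gradient_step_contraction_of_PL {L μ μp t fstar : ℝ} (hμL : μ < L)
    (hgrad : ∀ x, HasGradientAt f (f' x) x)
    (hupper : ConvexOn ℝ univ (fun x => L / 2 * ‖x‖ ^ 2 - f x))
    (hlower : ConvexOn ℝ univ (fun x => f x - μ / 2 * ‖x‖ ^ 2))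
    (ht : 0 < t) (hLt : 1 < L * t) (htL : L * t < 2) (hstep : 3 ≤ 2 * (L + μ) * t - L * μ * t ^ 2)
    (hμp : 0 ≤ μp) (x : E)
    (hPL : 2 * μp * (f (x - t • f' x) - fstar) ≤ ‖f' (x - t • f' x)‖ ^ 2) :
    f (x - t • f' x) - fstar ≤
      (L * t - 1) ^ 2 / ((L * t - 1) ^ 2 + μp * t * (2 - L * t)) * (f x - fstar) := by
  set y := x - t • f' x
  set r := f' y - (1 - μ * t) • f' x
  have hLμ : 0 < L - μ := sub_pos.mpr hμL
  have hA := interpolation_inequality hμL hgrad hupper hlower x y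
  have hB := interpolation_inequality hμL hgrad hupper hlower y x
  have hyx : y - x = -(t • f' x) := by simp [y]
  have hxy : x - y = t • f' x := by simp [y]
  have hrA : f' y - f' x - μ • -(t • f' x) = r := by simp only [r]; module
  have hrB : f' x - f' y - μ • (t • f' x) = -r := by simp only [r]; module
  rw [hyx, hrA, inner_neg_right, norm_neg, real_inner_smul_right, real_inner_self_eq_norm_sq,
    norm_smul, Real.norm_eq_abs, mul_pow, sq_abs] at hA
  rw [hxy, hrB, norm_neg, real_inner_smul_right, norm_smul, Real.norm_eq_abs, mul_pow, sq_abs,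
    real_inner_comm] at hB
  have hr : ‖r‖ ^ 2
      = ‖f' y‖ ^ 2 - 2 * (1 - μ * t) * ⟪f' x, f' y⟫ + (1 - μ * t) ^ 2 * ‖f' x‖ ^ 2 := by
    rw [norm_sub_sq_real, real_inner_smul_right, norm_smul, Real.norm_eq_abs, mul_pow, sq_abs,
      real_inner_comm]
    ring
  have hZ : 0 ≤ ‖(L * t - 1) • f' x + f' y‖ ^ 2 := sq_nonneg _
  rw [norm_add_sq_real, real_inner_smul_left, norm_smul, Real.norm_eq_abs, mul_pow, sq_abs] at hZ
  have h2Lμ : 0 < 2 * (L - μ) := by positivity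
  replace hA : ‖r‖ ^ 2
      ≤ 2 * (L - μ) * (f y - f x + t * ‖f' x‖ ^ 2 - μ / 2 * (t ^ 2 * ‖f' x‖ ^ 2)) := by
    rw [← div_le_iff₀' h2Lμ]; linarith
  replace hB : ‖r‖ ^ 2
      ≤ 2 * (L - μ) * (f x - f y - t * ⟪f' x, f' y⟫ - μ / 2 * (t ^ 2 * ‖f' x‖ ^ 2)) := by
    rw [← div_le_iff₀' h2Lμ]; linarith
  rw [hr] at hA hB
  have hLt1 : 0 ≤ L * t - 1 := by linarith
  have hLt2 : 0 ≤ 2 - L * t := by linarith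
  have hden : 0 < (L * t - 1) ^ 2 + μp * t * (2 - L * t) := by
    have : 0 ≤ μp * t * (2 - L * t) := mul_nonneg (mul_nonneg hμp ht.le) hLt2
    linarith [pow_pos (sub_pos.mpr hLt) 2]
  have key : 0 ≤ (L - μ) * ((L * t - 1) ^ 2 * (f x - fstar)
      - ((L * t - 1) ^ 2 + μp * t * (2 - L * t)) * (f y - fstar)) := by
    linarith [mul_nonneg (mul_nonneg hLt1 hLt2) (sub_nonneg.mpr hA),
      mul_nonneg hLt1 (sub_nonneg.mpr hB),
      mul_nonneg (mul_nonneg (mul_nonneg ht.le hLt2) hLμ.le) (sub_nonneg.mpr hPL),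
      mul_nonneg (sub_nonneg.mpr hstep) hZ]
  rw [div_mul_eq_mul_div, le_div_iff₀ hden]
  linarith [(mul_nonneg_iff_of_pos_left hLμ).mp key]

end

theorem stmt_2_general (n : ℕ)
    (f : EuclideanSpace ℝ (Fin n) → ℝ)
    (f' : EuclideanSpace ℝ (Fin n) → EuclideanSpace ℝ (Fin n))
    (L μ : ℝ) (hL : 0 < L) (hμ : μ ≤ 0)
    (hgrad : ∀ x, HasGradientAt f (f' x) x)
    (hupper : ConvexOn ℝ univ (fun x => L / 2 * ‖x‖ ^ 2 - f x))
    (hlower : ConvexOn ℝ univ (fun x => f x - μ / 2 * ‖x‖ ^ 2))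
    (fstar : ℝ)
    (μp : ℝ) (hμp : 0 < μp)
    (x1 : EuclideanSpace ℝ (Fin n))
    (hPL : ∀ x, f x ≤ f x1 → f x - fstar ≤ 1 / (2 * μp) * ‖f' x‖ ^ 2)
    (t1 : ℝ)
    (ht1 : t1 ∈ Ioo (3 / (μ + L + Real.sqrt (μ ^ 2 - L * μ + L ^ 2))) (2 / L))
    (x2 : EuclideanSpace ℝ (Fin n)) (hx2 : x2 = x1 - t1 • f' x1) :
    f x2 - fstar ≤
      (L * t1 - 1) ^ 2 / ((L * t1 - 1) ^ 2 + μp * t1 * (2 - L * t1)) *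
        (f x1 - fstar) := by
  obtain ⟨ht, hLt, htL, hstep⟩ := step_size_bounds hL hμ ht1
  subst hx2
  refine gradient_step_contraction_of_PL (by linarith) hgrad hupper hlower ht hLt htL hstep
    hμp.le x1 ?_
  have hPL2 := hPL _ (gradient_step_le hgrad hupper ht.le htL.le x1)
  rwa [one_div, ← div_eq_inv_mul, le_div_iff₀' (by positivity)] at hPL2

theorem stmt_2 (n : ℕ) (hn : 1 ≤ n)
    (f : EuclideanSpace ℝ (Fin n) → ℝ)
    (f' : EuclideanSpace ℝ (Fin n) → EuclideanSpace ℝ (Fin n))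
    (L μ : ℝ) (hL : 0 < L) (hμ : μ ≤ 0)
    (hgrad : ∀ x, HasGradientAt f (f' x) x)
    (hupper : ConvexOn ℝ univ (fun x => L / 2 * ‖x‖ ^ 2 - f x))
    (hlower : ConvexOn ℝ univ (fun x => f x - μ / 2 * ‖x‖ ^ 2))
    (fstar : ℝ) (hfstar : IsGLB (range f) fstar)
    (μp : ℝ) (hμp : 0 < μp) (hμpL : μp ≤ L)
    (x1 : EuclideanSpace ℝ (Fin n))
    (hPL : ∀ x, f x ≤ f x1 → f x - fstar ≤ 1 / (2 * μp) * ‖f' x‖ ^ 2)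
    (t1 : ℝ)
    (ht1 : t1 ∈ Ioo (3 / (μ + L + Real.sqrt (μ ^ 2 - L * μ + L ^ 2))) (2 / L))
    (x2 : EuclideanSpace ℝ (Fin n)) (hx2 : x2 = x1 - t1 • f' x1) :
    f x2 - fstar ≤
      (L * t1 - 1) ^ 2 / ((L * t1 - 1) ^ 2 + μp * t1 * (2 - L * t1)) *
        (f x1 - fstar) :=
  stmt_2_general n f f' L μ hL hμ hgrad hupper hlower fstar μp hμp x1 hPL t1 ht1 x2 hx2
end

section
/- Let n ≥ 1, L > 0, and let f : ℝⁿ → ℝ belong to F_{−L,L} (in particular, any L-smooth function). Assume f⋆ = inf f is finite and that f satisfies the PL inequality with constant μ_p, with 0 < μ_p ≤ L, on the sublevel set X = {x : f(x) ≤ f(x¹)} of a point x¹ ∈ ℝⁿ. If x² = x¹ − (1/L)∇f(x¹), then f(x²) − f⋆ ≤ ((2L − 2μ_p)/(2L + μ_p)) · (f(x¹) − f⋆). -/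
open Set
open scoped RealInnerProductSpace

/-!
Both convexity hypotheses give quadratic bounds around a point where the gradient is known: an
upper bound `f z ≤ f x + ⟪∇f x, z - x⟫ + L/2 ‖z - x‖²` and a lower bound with `-L` in place of `L`.
Comparing the upper bound at `x¹` with the lower bound at `x²` at the common point
`z = x¹ - (2 ∇f x¹ - ∇f x²) / (2L)` gives `2 ‖∇f x¹‖² + ‖∇f x²‖² ≤ 4L (f x¹ - f x²)`. In particular
`x²` lies in the sublevel set, and the PL inequality at `x¹` and at `x²` turns this into the rate.
-/

theorem ConvexOn.add_fderiv_sub_le {E : Type*} [NormedAddCommGroup E] [NormedSpace ℝ E]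
    {g : E → ℝ} {g' : E →L[ℝ] ℝ} {x : E} (hconv : ConvexOn ℝ univ g) (hg : HasFDerivAt g g' x)
    (y : E) : g x + g' (y - x) ≤ g y := by
  have hline : ConvexOn ℝ univ fun t : ℝ => g (x + t • (y - x)) := by
    simpa [Function.comp_def, AffineMap.lineMap_apply_module', add_comm] using
      hconv.comp_affineMap (AffineMap.lineMap x y : ℝ →ᵃ[ℝ] E)
  have hderiv : HasDerivAt (fun t : ℝ => g (x + t • (y - x))) (g' (y - x)) 0 := by
    have hl : HasDerivAt (fun t : ℝ => x + t • (y - x)) (y - x) 0 := by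
      simpa using ((hasDerivAt_id (0 : ℝ)).smul_const (y - x)).const_add x
    exact (by simpa using hg : HasFDerivAt g g' (x + (0 : ℝ) • (y - x))).comp_hasDerivAt 0 hl
  have := hline.le_slope_of_hasDerivAt (mem_univ 0) (mem_univ 1) one_pos hderiv
  simp only [slope_def_field, one_smul, add_sub_cancel, zero_smul, add_zero, sub_zero,
    div_one] at this
  linarith

variable {E : Type*} [NormedAddCommGroup E] [InnerProductSpace ℝ E] [CompleteSpace E]

theorem HasGradientAt.add_inner_add_norm_sq_le {f : E → ℝ} {g x : E} {c : ℝ}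
    (hf : HasGradientAt f g x) (hconv : ConvexOn ℝ univ fun y => f y - c / 2 * ‖y‖ ^ 2) (z : E) :
    f x + ⟪g, z - x⟫ + c / 2 * ‖z - x‖ ^ 2 ≤ f z := by
  have hd := (hasGradientAt_iff_hasFDerivAt.mp hf).sub
    ((hasStrictFDerivAt_norm_sq x).hasFDerivAt.const_mul (c / 2))
  have := hconv.add_fderiv_sub_le hd z
  simp only [sub_apply, smul_apply, nsmul_eq_mul, Nat.cast_ofNat,
    InnerProductSpace.toDual_apply_apply, innerSL_apply_apply, smul_eq_mul] at this
  rw [norm_sub_sq_real, inner_sub_right, real_inner_comm x z]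
  simp only [inner_sub_right, real_inner_self_eq_norm_sq] at this
  linarith

theorem HasGradientAt.le_add_inner_add_norm_sq {f : E → ℝ} {g x : E} {L : ℝ}
    (hf : HasGradientAt f g x) (hconv : ConvexOn ℝ univ fun y => L / 2 * ‖y‖ ^ 2 - f y) (z : E) :
    f z ≤ f x + ⟪g, z - x⟫ + L / 2 * ‖z - x‖ ^ 2 := by
  have hneg : HasGradientAt (fun y => -f y) (-g) x := by
    rw [hasGradientAt_iff_hasFDerivAt] at hf ⊢
    rw [map_neg]
    exact hf.neg
  have := hneg.add_inner_add_norm_sq_le (c := -L) (hconv.congr fun y _ => by ring) z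
  rw [inner_neg_left] at this
  linarith

theorem two_mul_norm_sq_add_norm_sq_le_of_gradient_step {f : E → ℝ} {L : ℝ} {x g₁ g₂ : E}
    (hL : 0 < L) (hupper : ConvexOn ℝ univ fun y => L / 2 * ‖y‖ ^ 2 - f y)
    (hlower : ConvexOn ℝ univ fun y => f y - (-L) / 2 * ‖y‖ ^ 2)
    (hx : HasGradientAt f g₁ x) (hx' : HasGradientAt f g₂ (x - (1 / L) • g₁)) :
    2 * ‖g₁‖ ^ 2 + ‖g₂‖ ^ 2 ≤ 4 * L * (f x - f (x - (1 / L) • g₁)) := by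
  set x' := x - (1 / L) • g₁
  set z := x - (1 / (2 * L)) • ((2 : ℝ) • g₁ - g₂)
  have hz : z - x = (-(1 / (2 * L))) • ((2 : ℝ) • g₁ - g₂) := by simp only [z]; module
  have hz' : z - x' = (1 / (2 * L)) • g₂ := by simp only [z, x']; field_simp; module
  have hi : ⟪g₁, z - x⟫ = 1 / (2 * L) * (⟪g₁, g₂⟫ - 2 * ‖g₁‖ ^ 2) := by
    rw [hz, real_inner_smul_right, inner_sub_right, real_inner_smul_right,
      real_inner_self_eq_norm_sq]
    ring
  have hn : ‖z - x‖ ^ 2 = (1 / (2 * L)) ^ 2 * (4 * ‖g₁‖ ^ 2 - 4 * ⟪g₁, g₂⟫ + ‖g₂‖ ^ 2) := by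
    rw [hz, norm_smul, mul_pow, norm_sub_sq_real, norm_smul, real_inner_smul_left]
    simp only [Real.norm_eq_abs, sq_abs, abs_two]
    ring
  have hi' : ⟪g₂, z - x'⟫ = 1 / (2 * L) * ‖g₂‖ ^ 2 := by
    rw [hz', real_inner_smul_right, real_inner_self_eq_norm_sq]
  have hn' : ‖z - x'‖ ^ 2 = (1 / (2 * L)) ^ 2 * ‖g₂‖ ^ 2 := by
    rw [hz', norm_smul, mul_pow, Real.norm_eq_abs, sq_abs]
  have hup := hx.le_add_inner_add_norm_sq hupper z
  have hlow := hx'.add_inner_add_norm_sq_le hlower z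
  rw [hi, hn] at hup
  rw [hi', hn'] at hlow
  field_simp at hup hlow
  linarith

theorem stmt_3_general (n : ℕ)
    (f : EuclideanSpace ℝ (Fin n) → ℝ)
    (f' : EuclideanSpace ℝ (Fin n) → EuclideanSpace ℝ (Fin n))
    (L : ℝ) (hL : 0 < L)
    (hgrad : ∀ x, HasGradientAt f (f' x) x)
    (hupper : ConvexOn ℝ univ (fun x => L / 2 * ‖x‖ ^ 2 - f x))
    (hlower : ConvexOn ℝ univ (fun x => f x - (-L) / 2 * ‖x‖ ^ 2))
    (fstar : ℝ)
    (μp : ℝ) (hμp : 0 < μp)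
    (x1 : EuclideanSpace ℝ (Fin n))
    (hPL : ∀ x, f x ≤ f x1 → f x - fstar ≤ 1 / (2 * μp) * ‖f' x‖ ^ 2)
    (x2 : EuclideanSpace ℝ (Fin n)) (hx2 : x2 = x1 - (1 / L) • f' x1) :
    f x2 - fstar ≤ (2 * L - 2 * μp) / (2 * L + μp) * (f x1 - fstar) := by
  have hstep := two_mul_norm_sq_add_norm_sq_le_of_gradient_step hL hupper hlower (hgrad x1)
    (hx2 ▸ hgrad x2)
  rw [← hx2] at hstep
  have hdecrease : f x2 ≤ f x1 := by nlinarith [sq_nonneg ‖f' x1‖, sq_nonneg ‖f' x2‖]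
  have hPL1 := hPL x1 le_rfl
  have hPL2 := hPL x2 hdecrease
  rw [one_div, inv_mul_eq_div, le_div_iff₀ (by positivity)] at hPL1 hPL2
  rw [div_mul_eq_mul_div, le_div_iff₀ (by positivity)]
  linarith

theorem stmt_3 (n : ℕ) (hn : 1 ≤ n)
    (f : EuclideanSpace ℝ (Fin n) → ℝ)
    (f' : EuclideanSpace ℝ (Fin n) → EuclideanSpace ℝ (Fin n))
    (L : ℝ) (hL : 0 < L)
    (hgrad : ∀ x, HasGradientAt f (f' x) x)
    (hupper : ConvexOn ℝ univ (fun x => L / 2 * ‖x‖ ^ 2 - f x))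
    (hlower : ConvexOn ℝ univ (fun x => f x - (-L) / 2 * ‖x‖ ^ 2))
    (fstar : ℝ) (hfstar : IsGLB (range f) fstar)
    (μp : ℝ) (hμp : 0 < μp) (hμpL : μp ≤ L)
    (x1 : EuclideanSpace ℝ (Fin n))
    (hPL : ∀ x, f x ≤ f x1 → f x - fstar ≤ 1 / (2 * μp) * ‖f' x‖ ^ 2)
    (x2 : EuclideanSpace ℝ (Fin n)) (hx2 : x2 = x1 - (1 / L) • f' x1) :
    f x2 - fstar ≤ (2 * L - 2 * μp) / (2 * L + μp) * (f x1 - fstar) :=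
  stmt_3_general n f f' L hL hgrad hupper hlower fstar μp hμp x1 hPL x2 hx2
end

section
/- Let L > 0, μ ≤ 0, 0 < μ_p ≤ L, and set c = μ + L + √(μ² − Lμ + L²). Define h : (0, 2/L) → ℝ by: h(t) = [ (μ_p(1 − Lt) + √((L − μ)(μ − μ_p)(2 − Lt)μ_p t + (L − μ)²)) / (L − μ + μ_p) ]² for t ∈ (0, 1/L); h(t) = ((Lt − 2)(μt − 2)μ_p t)/((L + μ − μ_p)t − 2) + 1 for t ∈ [1/L, 3/c]; and h(t) = (Lt − 1)²/((Lt − 1)² + μ_p t(2 − Lt)) for t ∈ (3/c, 2/L). Define the cubic r(t) = Lμ(L + μ − μ_p)t³ − (L² − μ_p(L + μ) + 5Lμ + μ²)t² + 4(L + μ)t − 4. Then: (a) if t̄ ∈ [1/L, 3/c] satisfies r(t̄) = 0, then h(t̄) ≤ h(t) for all t ∈ (0, 2/L); (b) if r has no root in [1/L, 3/c], then h(3/c) ≤ h(t) for all t ∈ (0, 2/L). -/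
/-!
On `[1/L, 3/c]` write `g` for the middle formula and `D = L + μ - μp`. Then
`g t - g s = μp (t - s) (2 r s + (t - s) A(s, t)) / ((D t - 2) (D s - 2))` with `A ≥ 0` and
both denominators negative, so `g s ≤ g t` whenever `(t - s) r s ≥ 0`: a root of `r` minimizes `g`
on the interval, and so does `3/c` when `r < 0` there, which is forced in case (b) because
`r (1/L) = (μp - L)/L ≤ 0`. The short-step formula decreases towards its value `g (1/L)` at `1/L`
and the long-step formula increases from its value `g (3/c)` at `3/c`, so a minimizer of `g` on
`[1/L, 3/c]` minimizes `h` on `(0, 2/L)`.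
-/

open Set

lemma ContinuousOn.neg_of_nonpos_of_forall_ne_zero {f : ℝ → ℝ} {a b : ℝ}
    (hf : ContinuousOn f (Icc a b)) (hab : a ≤ b) (ha : f a ≤ 0) (hne : ∀ x ∈ Icc a b, f x ≠ 0) :
    f b < 0 := by
  by_contra! hb
  obtain ⟨x, hx, hx0⟩ := intermediate_value_Icc hab hf ⟨ha, hb⟩
  exact hne x hx hx0

noncomputable section

def shortStepRate (L μ μp t : ℝ) : ℝ :=
  ((μp * (1 - L * t) + Real.sqrt ((L - μ) * (μ - μp) * (2 - L * t) * μp * t + (L - μ) ^ 2)) /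
    (L - μ + μp)) ^ 2

def midStepRate (L μ μp t : ℝ) : ℝ :=
  (L * t - 2) * (μ * t - 2) * μp * t / ((L + μ - μp) * t - 2) + 1

def longStepRate (L μp t : ℝ) : ℝ :=
  (L * t - 1) ^ 2 / ((L * t - 1) ^ 2 + μp * t * (2 - L * t))

/-- `midStepRate` has derivative `2 μp rateCubic t / ((L + μ - μp) t - 2) ^ 2`. -/
def rateCubic (L μ μp t : ℝ) : ℝ :=
  L * μ * (L + μ - μp) * t ^ 3 - (L ^ 2 - μp * (L + μ) + 5 * L * μ + μ ^ 2) * t ^ 2 +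
    4 * (L + μ) * t - 4

/-- Its positive root is `3 / c`, where the middle and long step formulas meet. -/
def switchQuadratic (L μ t : ℝ) : ℝ :=
  L * μ * t ^ 2 - 2 * (L + μ) * t + 3

end

section

variable {L μ μp c s t : ℝ}

lemma sq_eq_of_eq_add_sqrt (hc : c = μ + L + Real.sqrt (μ ^ 2 - L * μ + L ^ 2)) :
    c ^ 2 = 2 * (L + μ) * c - 3 * L * μ := by
  have h := Real.sq_sqrt (by nlinarith [sq_nonneg (μ - L)] : 0 ≤ μ ^ 2 - L * μ + L ^ 2)
  rw [hc]
  linear_combination h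

lemma pos_of_eq_add_sqrt (hL : 0 < L) (hμ : μ ≤ 0)
    (hc : c = μ + L + Real.sqrt (μ ^ 2 - L * μ + L ^ 2)) : 0 < c := by
  have h : Real.sqrt (μ ^ 2) < Real.sqrt (μ ^ 2 - L * μ + L ^ 2) :=
    Real.sqrt_lt_sqrt (sq_nonneg μ) (by nlinarith)
  rw [Real.sqrt_sq_eq_abs, abs_of_nonpos hμ] at h
  linarith

lemma switchQuadratic_eq_mul (hc0 : c ≠ 0) (hc : c ^ 2 = 2 * (L + μ) * c - 3 * L * μ) :
    switchQuadratic L μ s = (3 / c - s) * (c - L * μ * s) := by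
  unfold switchQuadratic
  field_simp
  linear_combination s * hc

lemma switchQuadratic_nonneg_iff (hL : 0 < L) (hμ : μ ≤ 0) (hc0 : 0 < c)
    (hc : c ^ 2 = 2 * (L + μ) * c - 3 * L * μ) (hs : 0 ≤ s) :
    0 ≤ switchQuadratic L μ s ↔ s ≤ 3 / c := by
  have hpos : 0 < c - L * μ * s := by nlinarith [mul_nonpos_of_nonpos_of_nonneg hμ hs]
  rw [switchQuadratic_eq_mul hc0.ne' hc, mul_nonneg_iff_of_pos_right hpos, sub_nonneg]

lemma mul_lt_two_of_switchQuadratic_nonneg (hμ : μ ≤ 0) (hs : 0 ≤ s)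
    (hq : 0 ≤ switchQuadratic L μ s) : L * s < 2 := by
  unfold switchQuadratic at hq
  by_contra! h
  nlinarith [mul_nonneg (mul_nonneg (neg_nonneg.2 hμ) hs) (sub_nonneg.2 h)]

lemma midStepRate_denom_neg (hμ : μ ≤ 0) (hμp : 0 < μp) (hs : 0 ≤ s) (hLs : L * s < 2) :
    (L + μ - μp) * s - 2 < 0 := by
  nlinarith [mul_nonneg (by linarith : 0 ≤ μp - μ) hs]

/-- The remainder `A(s, t)` of the expansion of `midStepRate t - midStepRate s` around `s`. -/
lemma midStepRate_remainder_nonneg (hL : 0 < L) (hμ : μ ≤ 0) (hμp : 0 < μp)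
    (hs : 1 ≤ L * s) (hq : 0 ≤ switchQuadratic L μ s) (ht : 1 ≤ L * t) :
    0 ≤ 4 * (L + μ) + 2 * μp * s * (L + μ) - 2 * s * (L ^ 2 + 4 * L * μ + μ ^ 2)
      - 2 * L * μ * t + L * μ * (L + μ - μp) * s * (2 * s + t) := by
  have hs0 : 0 ≤ s := by nlinarith
  have hLs := mul_lt_two_of_switchQuadratic_nonneg hμ hs0 hq
  have hD := midStepRate_denom_neg hμ hμp hs0 hLs
  unfold switchQuadratic at hq
  have hB : 0 ≤ 4 * L + 2 * μ - s * (2 * L ^ 2 + 7 * L * μ + μ ^ 2)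
      + 2 * L * μ * (L + μ) * s ^ 2 := by
    rcases le_or_gt 0 (L + μ) with h | h
    · nlinarith [mul_nonneg h hq, mul_nonneg hL.le (sub_nonneg.2 hs),
        mul_nonneg (neg_nonneg.2 hμ) (by nlinarith : (0:ℝ) ≤ 4 - L * s - 3 * μ * s)]
    · nlinarith [mul_nonneg (neg_nonneg.2 hμ) (sub_nonneg.2 hs),
        mul_nonneg (neg_nonneg.2 h.le) hq,
        mul_nonneg (mul_nonneg (neg_nonneg.2 hμ) (sub_nonneg.2 hs)) (sub_nonneg.2 hLs.le),
        mul_nonneg (mul_nonneg (neg_nonneg.2 hμ) (neg_nonneg.2 h.le)) (sub_nonneg.2 hs)]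
  have hT1 : 0 ≤ L * μ * ((L + μ - μp) * s - 2) * (L * t - 1) :=
    mul_nonneg (mul_nonneg_of_nonpos_of_nonpos (mul_nonpos_of_nonneg_of_nonpos hL.le hμ) hD.le)
      (sub_nonneg.2 ht)
  have hT2 : 0 ≤ L * μp * s * (2 * L + μ - 2 * L * μ * s) := by
    have : 0 ≤ 2 * L + μ - 2 * L * μ * s := by
      nlinarith [mul_nonneg (neg_nonneg.2 hμ) (sub_nonneg.2 hs)]
    positivity
  refine (mul_nonneg_iff_of_pos_left hL).1 ?_
  linear_combination L * hB + hT1 + hT2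

lemma midStepRate_le_of_rateCubic (hL : 0 < L) (hμ : μ ≤ 0) (hμp : 0 < μp)
    (hs : 1 ≤ L * s) (hqs : 0 ≤ switchQuadratic L μ s)
    (ht : 1 ≤ L * t) (hqt : 0 ≤ switchQuadratic L μ t)
    (hsign : 0 ≤ (t - s) * rateCubic L μ μp s) :
    midStepRate L μ μp s ≤ midStepRate L μ μp t := by
  have hs0 : 0 ≤ s := by nlinarith
  have ht0 : 0 ≤ t := by nlinarith
  have hDs := midStepRate_denom_neg hμ hμp hs0 (mul_lt_two_of_switchQuadratic_nonneg hμ hs0 hqs)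
  have hDt := midStepRate_denom_neg hμ hμp ht0 (mul_lt_two_of_switchQuadratic_nonneg hμ ht0 hqt)
  have hA := midStepRate_remainder_nonneg hL hμ hμp hs hqs ht
  have hP : 0 ≤ (L * t - 2) * (μ * t - 2) * μp * t * ((L + μ - μp) * s - 2) -
      ((L + μ - μp) * t - 2) * ((L * s - 2) * (μ * s - 2) * μp * s) := by
    unfold rateCubic at hsign
    linear_combination 2 * μp * hsign + μp * (t - s) ^ 2 * hA
  have hdiff := div_nonneg hP (mul_pos_of_neg_of_neg hDt hDs).le
  rw [← div_sub_div _ _ hDt.ne hDs.ne] at hdiff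
  unfold midStepRate
  linarith

lemma shortStepRate_one_div_le (hL : 0 < L) (hμ : μ ≤ 0) (hμp : 0 < μp)
    (ht : L * t ≤ 1) : shortStepRate L μ μp (1 / L) ≤ shortStepRate L μ μp t := by
  have hd : 0 < L - μ + μp := by linarith
  unfold shortStepRate
  rw [mul_one_div_cancel hL.ne', sub_self, mul_zero, zero_add]
  refine pow_le_pow_left₀ (div_nonneg (Real.sqrt_nonneg _) hd.le)
    (div_le_div_of_nonneg_right ?_ hd.le) 2
  refine le_add_of_nonneg_of_le (mul_nonneg hμp.le (by linarith)) (Real.sqrt_le_sqrt ?_)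
  field_simp
  nlinarith [mul_nonneg (mul_nonneg (mul_nonneg (by linarith : (0:ℝ) ≤ L - μ)
    (by linarith : (0:ℝ) ≤ μp - μ)) hμp.le) (sq_nonneg (L * t - 1))]

lemma midStepRate_one_div_eq_shortStepRate (hL : 0 < L) (hμ : μ ≤ 0) (hμp : 0 < μp)
    (hμpL : μp ≤ L) : midStepRate L μ μp (1 / L) = shortStepRate L μ μp (1 / L) := by
  have hd : 0 < L - μ + μp := by linarith
  have hDL := midStepRate_denom_neg (L := L) hμ hμp (one_div_pos.2 hL).le
    (by rw [mul_one_div_cancel hL.ne']; norm_num)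
  have hX : 0 ≤ (L - μ) * (μ - μp) * (2 - 1) * μp * (1 / L) + (L - μ) ^ 2 := by
    field_simp
    nlinarith [mul_nonneg (sub_nonneg.2 hμpL) (by positivity : (0:ℝ) ≤ L + μp),
      mul_nonneg (neg_nonneg.2 hμ) (sub_nonneg.2 hμpL)]
  unfold midStepRate shortStepRate
  rw [mul_one_div_cancel hL.ne', sub_self, mul_zero, zero_add, div_pow, Real.sq_sqrt hX,
    div_add_one hDL.ne, div_eq_div_iff hDL.ne (by positivity)]
  field_simp
  ring

lemma midStepRate_eq_longStepRate (hμ : μ ≤ 0) (hμp : 0 < μp) (hs : 0 < s)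
    (hq : switchQuadratic L μ s = 0) : midStepRate L μ μp s = longStepRate L μp s := by
  have hLs := mul_lt_two_of_switchQuadratic_nonneg hμ hs.le hq.ge
  have hDs := midStepRate_denom_neg hμ hμp hs.le hLs
  have hden : 0 < (L * s - 1) ^ 2 + μp * s * (2 - L * s) := by
    nlinarith [sq_nonneg (L * s - 1), mul_pos (mul_pos hμp hs) (sub_pos.2 hLs)]
  unfold switchQuadratic at hq
  unfold midStepRate longStepRate
  rw [div_add_one hDs.ne, div_eq_div_iff hDs.ne hden.ne']
  linear_combination (μp * s ^ 2 * (L - μp) * (L * s - 2)) * hq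

lemma longStepRate_le_of_le (hL : 0 < L) (hμp : 0 < μp) (hs : 1 ≤ L * s) (hst : s ≤ t)
    (ht : L * t < 2) :
    longStepRate L μp s ≤ longStepRate L μp t := by
  have hs0 : 0 < s := by nlinarith
  have ht0 : 0 < t := hs0.trans_le hst
  have hden : ∀ x, 0 < x → L * x < 2 → 0 < (L * x - 1) ^ 2 + μp * x * (2 - L * x) :=
    fun x hx hLx ↦ by nlinarith [sq_nonneg (L * x - 1), mul_pos (mul_pos hμp hx) (sub_pos.2 hLx)]
  unfold longStepRate
  rw [div_le_div_iff₀ (hden s hs0 (by nlinarith)) (hden t ht0 ht)]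
  nlinarith [mul_nonneg (mul_nonneg hμp.le (sub_nonneg.2 hst))
    (by nlinarith : (0:ℝ) ≤ L * s + L * t - 2)]

lemma rateCubic_one_div (hL : 0 < L) : rateCubic L μ μp (1 / L) = (μp - L) / L := by
  unfold rateCubic
  field_simp
  ring

lemma continuous_rateCubic : Continuous (rateCubic L μ μp) := by
  unfold rateCubic
  fun_prop

lemma mem_Icc_iff_switchQuadratic_nonneg (hL : 0 < L) (hμ : μ ≤ 0) (hc0 : 0 < c)
    (hc : c ^ 2 = 2 * (L + μ) * c - 3 * L * μ) :
    s ∈ Icc (1 / L) (3 / c) ↔ 1 ≤ L * s ∧ 0 ≤ switchQuadratic L μ s := by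
  rw [mem_Icc, div_le_iff₀' hL]
  refine and_congr_right fun hs ↦ (switchQuadratic_nonneg_iff hL hμ hc0 hc ?_).symm
  nlinarith

lemma one_div_le_three_div (hL : 0 < L) (hμ : μ ≤ 0) (hc0 : 0 < c)
    (hc : c ^ 2 = 2 * (L + μ) * c - 3 * L * μ) : 1 / L ≤ 3 / c := by
  have hq : switchQuadratic L μ (1 / L) = (L - μ) / L := by
    unfold switchQuadratic
    field_simp
    ring
  rw [← switchQuadratic_nonneg_iff hL hμ hc0 hc (one_div_pos.2 hL).le, hq]
  exact div_nonneg (by linarith) hL.le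

lemma le_of_rateCubic_sign (hL : 0 < L) (hμ : μ ≤ 0) (hμp : 0 < μp) (hμpL : μp ≤ L)
    (hc0 : 0 < c) (hc : c ^ 2 = 2 * (L + μ) * c - 3 * L * μ) {h : ℝ → ℝ}
    (hh1 : ∀ t ∈ Ioo 0 (1 / L), h t = shortStepRate L μ μp t)
    (hh2 : ∀ t ∈ Icc (1 / L) (3 / c), h t = midStepRate L μ μp t)
    (hh3 : ∀ t ∈ Ioo (3 / c) (2 / L), h t = longStepRate L μp t)
    (hs : s ∈ Icc (1 / L) (3 / c))
    (hsign : ∀ u ∈ Icc (1 / L) (3 / c), 0 ≤ (u - s) * rateCubic L μ μp s) :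
    ∀ t ∈ Ioo 0 (2 / L), h s ≤ h t := by
  have hmem := fun u ↦ mem_Icc_iff_switchQuadratic_nonneg (s := u) hL hμ hc0 hc
  have hmid : ∀ u ∈ Icc (1 / L) (3 / c), h s ≤ h u := fun u hu ↦ by
    rw [hh2 s hs, hh2 u hu]
    exact midStepRate_le_of_rateCubic hL hμ hμp ((hmem s).1 hs).1 ((hmem s).1 hs).2
      ((hmem u).1 hu).1 ((hmem u).1 hu).2 (hsign u hu)
  have hle := one_div_le_three_div hL hμ hc0 hc
  have hc3 : 0 < 3 / c := by positivity
  rintro t ⟨ht0, ht2⟩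
  rcases lt_or_ge t (1 / L) with ht | ht
  · calc h s ≤ h (1 / L) := hmid _ ⟨le_rfl, hle⟩
      _ = shortStepRate L μ μp (1 / L) := by
        rw [hh2 _ ⟨le_rfl, hle⟩, midStepRate_one_div_eq_shortStepRate hL hμ hμp hμpL]
      _ ≤ shortStepRate L μ μp t :=
        shortStepRate_one_div_le hL hμ hμp ((lt_div_iff₀' hL).1 (by rwa [one_div] at ht ⊢)).le
      _ = h t := (hh1 t ⟨ht0, ht⟩).symm
  rcases le_or_gt t (3 / c) with ht' | ht'
  · exact hmid t ⟨ht, ht'⟩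
  calc h s ≤ h (3 / c) := hmid _ ⟨hle, le_rfl⟩
    _ = longStepRate L μp (3 / c) := by
      rw [hh2 _ ⟨hle, le_rfl⟩, midStepRate_eq_longStepRate hμ hμp hc3
        (by rw [switchQuadratic_eq_mul hc0.ne' hc, sub_self, zero_mul])]
    _ ≤ longStepRate L μp t :=
      longStepRate_le_of_le hL hμp ((hmem _).1 ⟨hle, le_rfl⟩).1 ht'.le
        (by rwa [lt_div_iff₀' hL] at ht2)
    _ = h t := (hh3 t ⟨ht', ht2⟩).symm

end

theorem stmt_4 (L μ μp c : ℝ) (hL : 0 < L) (hμ : μ ≤ 0) (hμp : 0 < μp) (hμpL : μp ≤ L)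
    (hc : c = μ + L + Real.sqrt (μ ^ 2 - L * μ + L ^ 2))
    (h r : ℝ → ℝ)
    (hh1 : ∀ t ∈ Ioo 0 (1 / L),
      h t = ((μp * (1 - L * t) +
        Real.sqrt ((L - μ) * (μ - μp) * (2 - L * t) * μp * t + (L - μ) ^ 2)) /
          (L - μ + μp)) ^ 2)
    (hh2 : ∀ t ∈ Icc (1 / L) (3 / c),
      h t = (L * t - 2) * (μ * t - 2) * μp * t / ((L + μ - μp) * t - 2) + 1)
    (hh3 : ∀ t ∈ Ioo (3 / c) (2 / L),
      h t = (L * t - 1) ^ 2 / ((L * t - 1) ^ 2 + μp * t * (2 - L * t)))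
    (hr : ∀ t, r t = L * μ * (L + μ - μp) * t ^ 3 -
      (L ^ 2 - μp * (L + μ) + 5 * L * μ + μ ^ 2) * t ^ 2 + 4 * (L + μ) * t - 4) :
    (∀ tbar ∈ Icc (1 / L) (3 / c), r tbar = 0 →
        ∀ t ∈ Ioo 0 (2 / L), h tbar ≤ h t) ∧
    ((∀ t ∈ Icc (1 / L) (3 / c), r t ≠ 0) →
        ∀ t ∈ Ioo 0 (2 / L), h (3 / c) ≤ h t) := by
  obtain rfl : r = rateCubic L μ μp := funext hr
  have hc0 := pos_of_eq_add_sqrt hL hμ hc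
  have hc2 := sq_eq_of_eq_add_sqrt hc
  have hle := one_div_le_three_div hL hμ hc0 hc2
  have hmin := fun s ↦ le_of_rateCubic_sign (s := s) hL hμ hμp hμpL hc0 hc2 hh1 hh2 hh3
  refine ⟨fun tbar htb hroot ↦ hmin tbar htb fun u _ ↦ by rw [hroot, mul_zero], fun hnz ↦ ?_⟩
  have hneg : rateCubic L μ μp (3 / c) < 0 := by
    refine continuous_rateCubic.continuousOn.neg_of_nonpos_of_forall_ne_zero hle ?_ hnz
    rw [rateCubic_one_div hL]
    exact div_nonpos_of_nonpos_of_nonneg (by linarith) hL.le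
  exact hmin _ ⟨hle, le_rfl⟩ fun u hu ↦ mul_nonneg_of_nonpos_of_nonpos (by linarith [hu.2]) hneg.le
end

section
/- Let L > 0 and 0 < μ_p ≤ L, and take μ = 0, so c = μ + L + √(μ² − Lμ + L²) = 2L. Define h : (0, 2/L) → ℝ by: h(t) = [ (μ_p(1 − Lt) + √(L² − L μ_p² t(2 − Lt))) / (L + μ_p) ]² for t ∈ (0, 1/L); h(t) = (2μ_p t(2 − Lt))/((L − μ_p)t − 2) + 1 for t ∈ [1/L, 3/(2L)]; and h(t) = (Lt − 1)²/((Lt − 1)² + μ_p t(2 − Lt)) for t ∈ (3/(2L), 2/L). Then t⋆ = min{ 2/(L + √(L μ_p)), 3/(2L) } satisfies h(t⋆) ≤ h(t) for all t ∈ (0, 2/L). -/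
open Set
open scoped RealInnerProductSpace

/-!
The three pieces of `h` join continuously: the outer pieces meet the middle piece
`g t = 1 + 2 μ t (2 - L t) / ((L - μ) t - 2)` at `t = 1 / L` and `t = 3 / (2 L)`, and each outer
piece stays above the value of `g` at that junction. With `s = √(L μ)`, the difference
`g b - g a` has the sign of `(a - b) Q` where `Q = ((L + s) b - 2) ((L - s) a - 2) + 2 s (b - a)`,
so `g` decreases up to `2 / (L + s)` and increases after it. Hence on `[1 / L, 3 / (2 L)]` the
minimum of `g`, and so of `h`, is attained at `min (2 / (L + s)) (3 / (2 L))`.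
-/

theorem le_add_sqrt_add_sq {x : ℝ} (y : ℝ) (hx : 0 ≤ x) : y ≤ (x + √(y + x ^ 2)) ^ 2 := by
  calc y ≤ max (y + x ^ 2) 0 := le_max_of_le_left (by nlinarith)
    _ = √(y + x ^ 2) ^ 2 := Real.sq_sqrt'.symm
    _ ≤ (x + √(y + x ^ 2)) ^ 2 := by gcongr; linarith

noncomputable def rateMid (L μ t : ℝ) : ℝ :=
  2 * μ * t * (2 - L * t) / ((L - μ) * t - 2) + 1

section rateMid

variable {L μ : ℝ}

theorem rateMid_one_div (hL : 0 < L) (hμ : 0 ≤ μ) : rateMid L μ (1 / L) = (L - μ) / (L + μ) := by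
  have hLμ : L + μ ≠ 0 := by positivity
  have hden : (L - μ) * (1 / L) - 2 = -((L + μ) / L) := by field_simp; ring
  rw [rateMid, hden]
  field_simp
  ring

theorem rateMid_three_div (hL : 0 < L) (hμ : 0 ≤ μ) :
    rateMid L μ (3 / (2 * L)) = L / (L + 3 * μ) := by
  have hLμ : L + 3 * μ ≠ 0 := by positivity
  have hden : (L - μ) * (3 / (2 * L)) - 2 = -((L + 3 * μ) / (2 * L)) := by field_simp; ring
  rw [rateMid, hden]
  field_simp
  ring

theorem rateMid_denom_neg (hμ : 0 < μ) {t : ℝ} (ht : 0 < t) (htL : L * t ≤ 2) :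
    (L - μ) * t - 2 < 0 := by
  nlinarith

theorem rateMid_sub_rateMid {a b : ℝ} (ha : (L - μ) * a - 2 ≠ 0) (hb : (L - μ) * b - 2 ≠ 0) :
    rateMid L μ b - rateMid L μ a =
      2 * μ * ((a - b) * (L * (L - μ) * a * b - 2 * L * (a + b) + 4)) /
        (((L - μ) * a - 2) * ((L - μ) * b - 2)) := by
  rw [rateMid, rateMid, add_sub_add_right_eq_sub, div_sub_div _ _ hb ha]
  congr 1 <;> ring

theorem rateMid_le_rateMid {a b : ℝ} (hμ : 0 ≤ μ) (ha : (L - μ) * a - 2 < 0)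
    (hb : (L - μ) * b - 2 < 0)
    (hQ : 0 ≤ (a - b) * (L * (L - μ) * a * b - 2 * L * (a + b) + 4)) :
    rateMid L μ a ≤ rateMid L μ b := by
  rw [← sub_nonneg, rateMid_sub_rateMid ha.ne hb.ne]
  exact div_nonneg (by positivity) (mul_pos_of_neg_of_neg ha hb).le

theorem rateMid_antitoneOn (hL : 0 < L) (hμ : 0 < μ) :
    AntitoneOn (rateMid L μ) (Ioc 0 (2 / (L + √(L * μ)))) := by
  set s := √(L * μ)
  have hs : s ^ 2 = L * μ := Real.sq_sqrt (by positivity)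
  have hs0 : 0 ≤ s := Real.sqrt_nonneg _
  rintro a ⟨ha0, -⟩ b ⟨hb0, hbs⟩ hab
  rw [le_div_iff₀' (by positivity)] at hbs
  have hbL : L * b ≤ 2 := by nlinarith
  refine rateMid_le_rateMid hμ.le (rateMid_denom_neg hμ hb0 hbL)
    (rateMid_denom_neg hμ ha0 (by nlinarith)) ?_
  have hQ : L * (L - μ) * b * a - 2 * L * (b + a) + 4 =
      ((L + s) * b - 2) * ((L - s) * a - 2) + 2 * s * (b - a) := by
    linear_combination (a * b) * hs
  rw [hQ]
  have hLa : (L - s) * a ≤ 2 := by nlinarith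
  have hprod : 0 ≤ ((L + s) * b - 2) * ((L - s) * a - 2) :=
    mul_nonneg_of_nonpos_of_nonpos (by linarith) (by linarith)
  have hba : 0 ≤ b - a := by linarith
  positivity

theorem rateMid_monotoneOn (hL : 0 < L) (hμ : 0 < μ) :
    MonotoneOn (rateMid L μ) (Icc (2 / (L + √(L * μ))) (2 / L)) := by
  set s := √(L * μ)
  have hs : s ^ 2 = L * μ := Real.sq_sqrt (by positivity)
  have hs0 : 0 ≤ s := Real.sqrt_nonneg _
  rintro a ⟨has, -⟩ b ⟨-, hbL⟩ hab
  rw [div_le_iff₀' (by positivity)] at has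
  rw [le_div_iff₀' hL] at hbL
  have ha0 : 0 < a := by nlinarith
  refine rateMid_le_rateMid hμ.le (rateMid_denom_neg hμ ha0 (by nlinarith))
    (rateMid_denom_neg hμ (by linarith) hbL) ?_
  have hQ : L * (L - μ) * a * b - 2 * L * (a + b) + 4 =
      ((L + s) * a - 2) * ((L - s) * b - 2) + 2 * s * (a - b) := by
    linear_combination (a * b) * hs
  rw [hQ]
  have hprod : ((L + s) * a - 2) * ((L - s) * b - 2) ≤ 0 :=
    mul_nonpos_of_nonneg_of_nonpos (by linarith) (by nlinarith)
  have hab' : a - b ≤ 0 := by linarith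
  nlinarith [mul_nonneg_of_nonpos_of_nonpos hab' hprod, mul_nonneg hs0 (sq_nonneg (a - b))]

theorem rateMid_min_le (hL : 0 < L) (hμ : 0 < μ) {t : ℝ} (ht : t ∈ Ioc 0 (3 / (2 * L))) :
    rateMid L μ (min (2 / (L + √(L * μ))) (3 / (2 * L))) ≤ rateMid L μ t := by
  set tOpt := 2 / (L + √(L * μ))
  have htOpt : 0 < tOpt := by positivity
  rcases le_or_gt t (min tOpt (3 / (2 * L))) with hle | hlt
  · exact rateMid_antitoneOn hL hμ ⟨ht.1, hle.trans (min_le_left _ _)⟩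
      ⟨lt_min htOpt (by positivity), min_le_left _ _⟩ hle
  · rcases min_choice tOpt (3 / (2 * L)) with hmin | hmin <;> rw [hmin] at hlt ⊢
    · have h32 : 3 / (2 * L) ≤ 2 / L := by
        rw [div_le_div_iff₀ (by positivity) hL]; linarith
      have htOpt2 : tOpt ≤ 2 / L :=
        div_le_div_of_nonneg_left zero_le_two hL (le_add_of_nonneg_right (Real.sqrt_nonneg _))
      exact rateMid_monotoneOn hL hμ ⟨le_rfl, htOpt2⟩ ⟨hlt.le, ht.2.trans h32⟩ hlt.le
    · exact absurd ht.2 (not_le.2 hlt)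

end rateMid

theorem rateMid_one_div_le {L μ t : ℝ} (hL : 0 < L) (hμ : 0 ≤ μ) (ht : L * t ≤ 1) :
    rateMid L μ (1 / L) ≤
      ((μ * (1 - L * t) + √(L ^ 2 - L * μ ^ 2 * t * (2 - L * t))) / (L + μ)) ^ 2 := by
  have hLμ : 0 < L + μ := by positivity
  have hx : 0 ≤ μ * (1 - L * t) := mul_nonneg hμ (by linarith)
  have hE : L ^ 2 - L * μ ^ 2 * t * (2 - L * t) = (L ^ 2 - μ ^ 2) + (μ * (1 - L * t)) ^ 2 := by
    ring
  calc rateMid L μ (1 / L) = (L ^ 2 - μ ^ 2) / (L + μ) ^ 2 := by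
        rw [rateMid_one_div hL hμ]; field_simp; ring
    _ ≤ _ := by
        rw [div_pow, hE]
        gcongr
        exact le_add_sqrt_add_sq _ hx

theorem rateMid_three_div_le {L μ t : ℝ} (hL : 0 < L) (hμ : 0 ≤ μ) (ht3 : 3 ≤ 2 * L * t)
    (ht2 : L * t ≤ 2) :
    rateMid L μ (3 / (2 * L)) ≤ (L * t - 1) ^ 2 / ((L * t - 1) ^ 2 + μ * t * (2 - L * t)) := by
  have ht : 0 < t := by nlinarith
  have hden : 0 < (L * t - 1) ^ 2 + μ * t * (2 - L * t) := by
    have : 0 ≤ μ * t * (2 - L * t) := mul_nonneg (by positivity) (by linarith)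
    nlinarith
  rw [rateMid_three_div hL hμ, div_le_div_iff₀ (by positivity) hden]
  -- the difference of the two sides is `μ (2 L t - 1) (2 L t - 3)`
  nlinarith [mul_nonneg (mul_nonneg hμ (by linarith : (0 : ℝ) ≤ 2 * L * t - 1))
    (by linarith : (0 : ℝ) ≤ 2 * L * t - 3)]

theorem stmt_5 (L μp : ℝ) (hL : 0 < L) (hμp : 0 < μp) (hμpL : μp ≤ L)
    (h : ℝ → ℝ)
    (hh1 : ∀ t ∈ Ioo 0 (1 / L),
      h t = ((μp * (1 - L * t) +
        Real.sqrt (L ^ 2 - L * μp ^ 2 * t * (2 - L * t))) / (L + μp)) ^ 2)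
    (hh2 : ∀ t ∈ Icc (1 / L) (3 / (2 * L)),
      h t = 2 * μp * t * (2 - L * t) / ((L - μp) * t - 2) + 1)
    (hh3 : ∀ t ∈ Ioo (3 / (2 * L)) (2 / L),
      h t = (L * t - 1) ^ 2 / ((L * t - 1) ^ 2 + μp * t * (2 - L * t))) :
    ∀ t ∈ Ioo 0 (2 / L),
      h (min (2 / (L + Real.sqrt (L * μp))) (3 / (2 * L))) ≤ h t := by
  have hsL : √(L * μp) ≤ L := Real.sqrt_le_left hL.le |>.2 (by nlinarith)
  have h13 : 1 / L ≤ 3 / (2 * L) := by rw [div_le_div_iff₀ hL (by positivity)]; linarith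
  have hstar : min (2 / (L + √(L * μp))) (3 / (2 * L)) ∈ Icc (1 / L) (3 / (2 * L)) :=
    ⟨le_min (by rw [div_le_div_iff₀ hL (by positivity)]; linarith) h13, min_le_right _ _⟩
  rw [hh2 _ hstar]
  rintro t ⟨ht0, ht2⟩
  rcases lt_or_ge t (1 / L) with ht1 | ht1
  · rw [hh1 t ⟨ht0, ht1⟩]
    exact (rateMid_min_le hL hμp ⟨by positivity, h13⟩).trans
      (rateMid_one_div_le hL hμp.le ((lt_div_iff₀' hL).1 ht1).le)
  rcases le_or_gt t (3 / (2 * L)) with ht3 | ht3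
  · rw [hh2 t ⟨ht1, ht3⟩]
    exact rateMid_min_le hL hμp ⟨ht0, ht3⟩
  · rw [hh3 t ⟨ht3, ht2⟩]
    exact (rateMid_min_le hL hμp ⟨by positivity, le_rfl⟩).trans
      (rateMid_three_div_le hL hμp.le ((div_lt_iff₀' (by positivity)).1 ht3).le
        ((lt_div_iff₀' hL).1 ht2).le)
end

section
/- Let n ≥ 1, L > 0, μ ≤ 0, and let f : ℝⁿ → ℝ belong to F_{μ,L}. Assume the set X⋆ of global minimizers of f is nonempty, with minimum value f⋆. If f has quadratic gradient growth with constant μ_g > 0 on a set X ⊆ ℝⁿ, then f satisfies the PL inequality with constant μ_p = μ_g²/L on X; that is, f(x) − f⋆ ≤ (L/(2μ_g²))‖∇f(x)‖² for all x ∈ X. -/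
open Set
open scoped RealInnerProductSpace

/-! Since `(L/2)‖·‖² - f` is convex and `∇f(x⋆) = 0` at a minimizer `x⋆`, the first-order
convexity inequality gives the descent bound `f x - f⋆ ≤ (L/2)‖x - x⋆‖²`. Quadratic gradient
growth and Cauchy–Schwarz give `μ_g ‖x - x⋆‖ ≤ ‖∇f x‖`; substituting yields the PL inequality. -/

section

variable {E : Type*} [NormedAddCommGroup E] [NormedSpace ℝ E]

theorem ConvexOn.add_fderiv_le {g : E → ℝ} {g' : E →L[ℝ] ℝ} {x : E}
    (hg : ConvexOn ℝ univ g) (hg' : HasFDerivAt g g' x) (y : E) :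
    g x + g' (y - x) ≤ g y := by
  have hline : HasDerivAt (AffineMap.lineMap x y : ℝ → E) (y - x) 0 := by
    simpa using AffineMap.hasDerivAt_lineMap (a := x) (b := y) (x := (0 : ℝ))
  have hderiv := hg'.comp_hasDerivAt_of_eq (0 : ℝ) hline (by simp)
  have hconv : ConvexOn ℝ univ (g ∘ (AffineMap.lineMap x y : ℝ → E)) := by
    simpa using hg.comp_affineMap (AffineMap.lineMap x y : ℝ →ᵃ[ℝ] E)
  have := hconv.le_slope_of_hasDerivAt (mem_univ 0) (mem_univ 1) one_pos hderiv
  simpa [slope_def_field, le_sub_iff_add_le'] using this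

end

section

variable {E : Type*} [NormedAddCommGroup E] [InnerProductSpace ℝ E]

theorem mul_norm_le_norm_of_mul_sq_le_inner {c : ℝ} {u v : E} (h : c * ‖v‖ ^ 2 ≤ ⟪u, v⟫) :
    c * ‖v‖ ≤ ‖u‖ := by
  rcases (norm_nonneg v).eq_or_lt with hv | hv
  · rw [← hv, mul_zero]
    exact norm_nonneg u
  · have := h.trans (real_inner_le_norm u v)
    rw [sq, ← mul_assoc] at this
    exact le_of_mul_le_mul_right this hv

variable [CompleteSpace E]

theorem le_add_inner_add_of_convexOn_sq_sub {f : E → ℝ} {L : ℝ} {x f'x : E}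
    (hconv : ConvexOn ℝ univ (fun x => L / 2 * ‖x‖ ^ 2 - f x)) (hf : HasGradientAt f f'x x)
    (y : E) : f y ≤ f x + ⟪f'x, y - x⟫ + L / 2 * ‖y - x‖ ^ 2 := by
  have hsq : HasFDerivAt (fun x : E => L / 2 * ‖x‖ ^ 2) ((L / 2) • (2 • innerSL ℝ x)) x := by
    simpa using ((hasFDerivAt_id x).norm_sq).const_mul (L / 2)
  have := hconv.add_fderiv_le (hsq.sub hf.hasFDerivAt) y
  simp only [sub_apply, smul_apply, innerSL_apply_apply,
    InnerProductSpace.toDual_apply_apply, smul_eq_mul, two_nsmul, add_apply,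
    inner_sub_right, real_inner_self_eq_norm_sq] at this
  rw [norm_sub_sq_real, inner_sub_right, real_inner_comm x y]
  linear_combination this

theorem sub_le_of_convexOn_sq_sub_of_isMin {f : E → ℝ} {L : ℝ} {xs f'xs : E}
    (hconv : ConvexOn ℝ univ (fun x => L / 2 * ‖x‖ ^ 2 - f x)) (hf : HasGradientAt f f'xs xs)
    (hmin : ∀ z, f xs ≤ f z) (y : E) : f y - f xs ≤ L / 2 * ‖y - xs‖ ^ 2 := by
  have hzero : f'xs = 0 := by
    simpa using IsLocalMin.hasFDerivAt_eq_zero (Filter.Eventually.of_forall hmin) hf.hasFDerivAt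
  have := le_add_inner_add_of_convexOn_sq_sub hconv hf y
  rw [hzero, inner_zero_left] at this
  linarith

end

theorem stmt_8_general (n : ℕ)
    (f : EuclideanSpace ℝ (Fin n) → ℝ)
    (f' : EuclideanSpace ℝ (Fin n) → EuclideanSpace ℝ (Fin n))
    (L : ℝ) (hL : 0 < L)
    (hgrad : ∀ x, HasGradientAt f (f' x) x)
    (hupper : ConvexOn ℝ univ (fun x => L / 2 * ‖x‖ ^ 2 - f x))
    (xs : EuclideanSpace ℝ (Fin n)) (hxs : ∀ z, f xs ≤ f z)
    (X : Set (EuclideanSpace ℝ (Fin n)))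
    (μg : ℝ) (hμg : 0 < μg)
    (hQG : ∀ x ∈ X, ∃ xstar ∈ {y | ∀ z, f y ≤ f z},
      ‖x - xstar‖ = Metric.infDist x {y | ∀ z, f y ≤ f z} ∧
      μg * (Metric.infDist x {y | ∀ z, f y ≤ f z}) ^ 2 ≤ ⟪f' x, x - xstar⟫) :
    ∀ x ∈ X, f x - f xs ≤ L / (2 * μg ^ 2) * ‖f' x‖ ^ 2 := by
  intro x hx
  obtain ⟨xstar, hstar, hdist, hgrowth⟩ := hQG x hx
  rw [← hdist] at hgrowth
  have hmin_eq : f xstar = f xs := le_antisymm (hstar xs) (hxs xstar)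
  calc f x - f xs = f x - f xstar := by rw [hmin_eq]
    _ ≤ L / 2 * ‖x - xstar‖ ^ 2 :=
      sub_le_of_convexOn_sq_sub_of_isMin hupper (hgrad xstar) hstar x
    _ = L / (2 * μg ^ 2) * (μg * ‖x - xstar‖) ^ 2 := by field_simp
    _ ≤ L / (2 * μg ^ 2) * ‖f' x‖ ^ 2 := by
      gcongr
      exact mul_norm_le_norm_of_mul_sq_le_inner hgrowth

theorem stmt_8 (n : ℕ) (hn : 1 ≤ n)
    (f : EuclideanSpace ℝ (Fin n) → ℝ)
    (f' : EuclideanSpace ℝ (Fin n) → EuclideanSpace ℝ (Fin n))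
    (L μ : ℝ) (hL : 0 < L) (hμ : μ ≤ 0)
    (hgrad : ∀ x, HasGradientAt f (f' x) x)
    (hupper : ConvexOn ℝ univ (fun x => L / 2 * ‖x‖ ^ 2 - f x))
    (hlower : ConvexOn ℝ univ (fun x => f x - μ / 2 * ‖x‖ ^ 2))
    (xs : EuclideanSpace ℝ (Fin n)) (hxs : ∀ z, f xs ≤ f z)
    (X : Set (EuclideanSpace ℝ (Fin n)))
    (μg : ℝ) (hμg : 0 < μg)
    (hQG : ∀ x ∈ X, ∃ xstar ∈ {y | ∀ z, f y ≤ f z},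
      ‖x - xstar‖ = Metric.infDist x {y | ∀ z, f y ≤ f z} ∧
      μg * (Metric.infDist x {y | ∀ z, f y ≤ f z}) ^ 2 ≤ ⟪f' x, x - xstar⟫) :
    ∀ x ∈ X, f x - f xs ≤ L / (2 * μg ^ 2) * ‖f' x‖ ^ 2 :=
  stmt_8_general n f f' L hL hgrad hupper xs hxs X μg hμg hQG
end

section
/- Let n ≥ 1, L > 0, μ ≤ 0, and let f : ℝⁿ → ℝ belong to F_{μ,L}. Assume the set X⋆ of global minimizers of f is nonempty, with minimum value f⋆, and let X = {x : f(x) ≤ f(x¹)} for some x¹ ∈ ℝⁿ. If f satisfies the PL inequality with constant μ_p > 0 on X, then f has quadratic functional growth with constant μ_q = μ_p on X; that is, (μ_p/2) d_{X⋆}(x)² ≤ f(x) − f⋆ for all x ∈ X. -/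
open Set Filter Metric

/-!
Put `g = √(f - f⋆)`. Where `f > f⋆`, the PL inequality says exactly that
`‖∇g‖ ≥ √(μ_p / 2)`. A function whose gradient has norm at least `c` off its zero set
satisfies `c · d(x, {g = 0}) ≤ g x`: for `c' < c`, a minimizer `y` of `g + c' · dist · x`
exists by coercivity, lies in the sublevel set `{g ≤ g x}`, and cannot have `g y > 0`, since
minimality bounds `‖∇g y‖` by `c'`. Then `g x ≥ g y + c' · dist y x = c' · dist y x`, and
squaring gives quadratic growth.
-/

section ErrorBound

variable {E : Type*} [NormedAddCommGroup E] [InnerProductSpace ℝ E]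

theorem norm_le_of_hasGradientAt_of_forall_le_add_mul_norm [CompleteSpace E] {φ : E → ℝ}
    {u y : E} {c : ℝ} (hc : 0 ≤ c) (hφ : HasGradientAt φ u y)
    (hmin : ∀ z, φ y ≤ φ z + c * ‖z - y‖) : ‖u‖ ≤ c := by
  set ψ : ℝ → ℝ := fun t => φ (y - t • u) + t * (c * ‖u‖)
  have hline : HasDerivAt (fun t : ℝ => y - t • u) (-u) 0 := by
    simpa using ((hasDerivAt_id (0 : ℝ)).smul_const u).const_sub y
  have hψ : HasDerivAt ψ (c * ‖u‖ - ‖u‖ ^ 2) 0 := by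
    have hφ' : HasFDerivAt φ (InnerProductSpace.toDual ℝ E u) (y - (0 : ℝ) • u) := by
      simpa using hφ.hasFDerivAt
    refine ((hφ'.comp_hasDerivAt (0 : ℝ) hline).add
      (hasDerivAt_mul_const (c * ‖u‖))).congr_deriv ?_
    simp only [InnerProductSpace.toDual_apply_apply, inner_neg_right, real_inner_self_eq_norm_sq]
    ring
  have hψmin : IsMinOn ψ (Ici 0) 0 := fun t (ht : 0 ≤ t) => by
    have := hmin (y - t • u)
    simp only [sub_sub_cancel_left, norm_neg, norm_smul, Real.norm_of_nonneg ht] at this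
    show ψ 0 ≤ ψ t
    simp only [ψ, zero_smul, sub_zero, zero_mul, add_zero]
    linarith
  have hslope : 0 ≤ c * ‖u‖ - ‖u‖ ^ 2 := by
    simpa using hψmin.localize.hasFDerivWithinAt_nonneg hψ.hasDerivWithinAt.hasFDerivWithinAt
      (y := 1) (mem_posTangentConeAt_of_segment_subset (by simp [Icc_subset_Ici_self]))
  nlinarith [norm_nonneg u]

variable [ProperSpace E] {g : E → ℝ} {S : Set E} {c : ℝ} {x : E}

theorem mul_infDist_le_of_lt_norm_gradient (hc : 0 < c) (hg : Continuous g)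
    (hg₀ : ∀ z, 0 ≤ g z) (hS : ∀ y, g y = 0 → y ∈ S)
    (hslope : ∀ y, 0 < g y → g y ≤ g x → ∃ u, HasGradientAt g u y ∧ c < ‖u‖) :
    c * infDist x S ≤ g x := by
  obtain ⟨y, hy⟩ : ∃ y, ∀ z, g y + c * dist y x ≤ g z + c * dist z x := by
    refine (hg.add (continuous_const.mul (continuous_id.dist continuous_const))).exists_forall_le ?_
    exact tendsto_atTop_mono (fun z => le_add_of_nonneg_left (hg₀ z))
      ((tendsto_const_mul_atTop_of_pos hc).2 (tendsto_dist_right_cocompact_atTop x))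
  have hyx : g y + c * dist y x ≤ g x := by simpa using hy x
  have hgy : g y = 0 := by
    by_contra hne
    obtain ⟨u, hu, hcu⟩ :=
      hslope y ((hg₀ y).lt_of_ne' hne) (by nlinarith [dist_nonneg (x := y) (y := x)])
    have hmin : ∀ z, g y ≤ g z + c * ‖z - y‖ := fun z => by
      have := hy z
      nlinarith [dist_triangle z y x, dist_eq_norm z y]
    linarith [norm_le_of_hasGradientAt_of_forall_le_add_mul_norm hc.le hu hmin]
  calc c * infDist x S ≤ c * dist x y :=
        mul_le_mul_of_nonneg_left (infDist_le_dist_of_mem (hS y hgy)) hc.le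
    _ ≤ g x := by rw [dist_comm]; linarith

theorem mul_infDist_le_of_le_norm_gradient (hg : Continuous g) (hg₀ : ∀ z, 0 ≤ g z)
    (hS : ∀ y, g y = 0 → y ∈ S)
    (hslope : ∀ y, 0 < g y → g y ≤ g x → ∃ u, HasGradientAt g u y ∧ c ≤ ‖u‖) :
    c * infDist x S ≤ g x := by
  rcases le_or_gt c 0 with hc | hc
  · exact (mul_nonpos_of_nonpos_of_nonneg hc infDist_nonneg).trans (hg₀ x)
  refine le_of_tendsto ((continuous_id.mul continuous_const).tendsto c |>.mono_left
    nhdsWithin_le_nhds) (eventually_of_mem (Ioo_mem_nhdsLT hc) fun c' hc' => ?_)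
  exact mul_infDist_le_of_lt_norm_gradient hc'.1 hg hg₀ hS fun y hy hyx =>
    (hslope y hy hyx).imp fun _ hu => ⟨hu.1, hc'.2.trans_le hu.2⟩

end ErrorBound

section PolyakLojasiewicz

variable {E : Type*} [NormedAddCommGroup E] [InnerProductSpace ℝ E] [CompleteSpace E]
  {f : E → ℝ} {u y : E}

theorem HasGradientAt.sqrt (hf : HasGradientAt f u y) (hy : f y ≠ 0) :
    HasGradientAt (fun z => √(f z)) ((1 / (2 * √(f y))) • u) y := by
  simpa using (hf.hasFDerivAt.sqrt hy).hasGradientAt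

theorem exists_hasGradientAt_sqrt_sub_of_polyakLojasiewicz {m μp : ℝ} (hμp : 0 < μp)
    (hf : HasGradientAt f u y) (hy : m < f y) (hPL : f y - m ≤ 1 / (2 * μp) * ‖u‖ ^ 2) :
    ∃ v, HasGradientAt (fun z => √(f z - m)) v y ∧ √(μp / 2) ≤ ‖v‖ := by
  have ha : 0 < f y - m := sub_pos.2 hy
  refine ⟨_, (hasGradientAt_iff_hasFDerivAt.2 (hf.hasFDerivAt.sub_const m)).sqrt ha.ne', ?_⟩
  have hPL' : (√(μp / 2) * (2 * √(f y - m))) ^ 2 ≤ ‖u‖ ^ 2 := by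
    rw [mul_pow, mul_pow, Real.sq_sqrt (by positivity), Real.sq_sqrt ha.le]
    rw [div_mul_eq_mul_div, one_mul, le_div_iff₀ (by positivity)] at hPL
    linarith
  rw [norm_smul, Real.norm_of_nonneg (by positivity), one_div, ← div_eq_inv_mul,
    le_div_iff₀ (by positivity)]
  exact (pow_le_pow_iff_left₀ (by positivity) (norm_nonneg u) two_ne_zero).1 hPL'

end PolyakLojasiewicz

theorem stmt_10_general (n : ℕ)
    (f : EuclideanSpace ℝ (Fin n) → ℝ)
    (f' : EuclideanSpace ℝ (Fin n) → EuclideanSpace ℝ (Fin n))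
    (hgrad : ∀ x, HasGradientAt f (f' x) x)
    (xs : EuclideanSpace ℝ (Fin n)) (hxs : ∀ z, f xs ≤ f z)
    (x1 : EuclideanSpace ℝ (Fin n))
    (μp : ℝ) (hμp : 0 < μp)
    (hPL : ∀ x, f x ≤ f x1 → f x - f xs ≤ 1 / (2 * μp) * ‖f' x‖ ^ 2) :
    ∀ x, f x ≤ f x1 →
      μp / 2 * (Metric.infDist x {y | ∀ z, f y ≤ f z}) ^ 2 ≤ f x - f xs := by
  intro x hx
  have hf : Continuous f :=
    continuous_iff_continuousAt.2 fun z => (hgrad z).differentiableAt.continuousAt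
  have hminimizer : ∀ y, √(f y - f xs) = 0 → ∀ z, f y ≤ f z := fun y hy z => by
    linarith [Real.sqrt_eq_zero'.1 hy, hxs z]
  have hbound := mul_infDist_le_of_le_norm_gradient (g := fun z => √(f z - f xs))
    (c := √(μp / 2)) (x := x) (hf.sub continuous_const).sqrt (fun _ => Real.sqrt_nonneg _)
    hminimizer fun y hy hyx => by
      have hfy : f y ≤ f x := by
        linarith [(Real.sqrt_le_sqrt_iff (sub_nonneg.2 (hxs x))).1 hyx]
      exact exists_hasGradientAt_sqrt_sub_of_polyakLojasiewicz hμp (hgrad y)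
        (sub_pos.1 (Real.sqrt_pos.1 hy)) (hPL y (hfy.trans hx))
  have hsq := pow_le_pow_left₀ (mul_nonneg (Real.sqrt_nonneg _) infDist_nonneg) hbound 2
  rwa [mul_pow, Real.sq_sqrt (by positivity), Real.sq_sqrt (sub_nonneg.2 (hxs x))] at hsq

theorem stmt_10 (n : ℕ) (hn : 1 ≤ n)
    (f : EuclideanSpace ℝ (Fin n) → ℝ)
    (f' : EuclideanSpace ℝ (Fin n) → EuclideanSpace ℝ (Fin n))
    (L μ : ℝ) (hL : 0 < L) (hμ : μ ≤ 0)
    (hgrad : ∀ x, HasGradientAt f (f' x) x)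
    (hupper : ConvexOn ℝ univ (fun x => L / 2 * ‖x‖ ^ 2 - f x))
    (hlower : ConvexOn ℝ univ (fun x => f x - μ / 2 * ‖x‖ ^ 2))
    (xs : EuclideanSpace ℝ (Fin n)) (hxs : ∀ z, f xs ≤ f z)
    (x1 : EuclideanSpace ℝ (Fin n))
    (μp : ℝ) (hμp : 0 < μp)
    (hPL : ∀ x, f x ≤ f x1 → f x - f xs ≤ 1 / (2 * μp) * ‖f' x‖ ^ 2) :
    ∀ x, f x ≤ f x1 →
      μp / 2 * (Metric.infDist x {y | ∀ z, f y ≤ f z}) ^ 2 ≤ f x - f xs :=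
  stmt_10_general n f f' hgrad xs hxs x1 μp hμp hPL
end

section
/- Let n ≥ 1, L > 0, μ ≤ 0, and let f : ℝⁿ → ℝ belong to F_{μ,L}. Let x⋆ be the unique global minimizer of f, with f⋆ = f(x⋆), let x¹ ∈ ℝⁿ, and suppose the sublevel set X = {x : f(x) ≤ f(x¹)} is star convex at x⋆. If f is (γ, μ_s)-quasar-convex on X with respect to x⋆, for some γ ∈ (0, 1] and μ_s ≥ 0, then for every x ∈ X one has ⟨∇f(x), x − x⋆⟩ ≥ (μ_s γ/2 + μ_s γ²/4) ‖x − x⋆‖²; that is, f has quadratic gradient growth with constant μ_g = μ_s γ/2 + μ_s γ²/4 on X. -/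
open Set
open scoped RealInnerProductSpace

/-
Quasar-convexity at a point `y` together with `f⋆ ≤ f y` gives
`⟪∇f y, y - x⋆⟫ ≥ γ (f y - f⋆) + (γ μs / 2) ‖y - x⋆‖²`. Along the segment from `x⋆` to `x`, which
stays in `X` by star convexity, this bounds the derivative of `t ↦ f (x⋆ + t (x - x⋆))` below by
`t γ μs ‖x - x⋆‖² / 2`; integrating gives the quadratic growth `f x - f⋆ ≥ (γ μs / 4) ‖x - x⋆‖²`.
Feeding this back into the first inequality at `x` yields the constant `μs γ / 2 + μs γ² / 4`.
-/

theorem half_le_sub_of_mul_le_deriv {g g' : ℝ → ℝ} {c : ℝ}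
    (hcont : ContinuousOn g (Icc 0 1)) (hderiv : ∀ t ∈ Ioo (0 : ℝ) 1, HasDerivAt g (g' t) t)
    (hbound : ∀ t ∈ Ioo (0 : ℝ) 1, c * t ≤ g' t) :
    c / 2 ≤ g 1 - g 0 := by
  set G : ℝ → ℝ := fun t => g t - c / 2 * t ^ 2
  have hG : ∀ t ∈ Ioo (0 : ℝ) 1, HasDerivAt G (g' t - c * t) t := fun t ht =>
    ((hderiv t ht).sub ((hasDerivAt_pow 2 t).const_mul (c / 2))).congr_deriv (by push_cast; ring)
  have hmono : MonotoneOn G (Icc 0 1) := by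
    refine monotoneOn_of_deriv_nonneg (convex_Icc 0 1) ?_ ?_ ?_
    · exact hcont.sub (by fun_prop)
    · rw [interior_Icc]
      exact fun t ht => (hG t ht).differentiableAt.differentiableWithinAt
    · rw [interior_Icc]
      intro t ht
      rw [(hG t ht).deriv]
      linarith [hbound t ht]
  have := hmono (left_mem_Icc.2 zero_le_one) (right_mem_Icc.2 zero_le_one) zero_le_one
  simp only [G] at this
  linarith

variable {E : Type*} [NormedAddCommGroup E] [InnerProductSpace ℝ E]

def IsQuasarConvexOn (f : E → ℝ) (f' : E → E) (S : Set E) (xstar : E) (γ μs : ℝ) : Prop :=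
  ∀ x ∈ S, f x + (1 / γ) * ⟪f' x, xstar - x⟫ + μs / 2 * ‖xstar - x‖ ^ 2 ≤ f xstar

namespace IsQuasarConvexOn

variable {f : E → ℝ} {f' : E → E} {S : Set E} {xstar x : E} {γ μs : ℝ}

theorem le_inner (h : IsQuasarConvexOn f f' S xstar γ μs) (hγ : 0 < γ) (hx : x ∈ S) :
    γ * (f x - f xstar) + γ * μs / 2 * ‖x - xstar‖ ^ 2 ≤ ⟪f' x, x - xstar⟫ := by
  have hq := h x hx
  rw [← neg_sub x xstar, inner_neg_right, norm_neg] at hq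
  have hscaled := mul_le_mul_of_nonneg_left hq hγ.le
  field_simp at hscaled
  linarith

theorem quadratic_growth [CompleteSpace E] (h : IsQuasarConvexOn f f' S xstar γ μs)
    (hγ : 0 < γ) (hS : StarConvex ℝ xstar S) (hgrad : ∀ y, HasGradientAt f (f' y) y)
    (hmin : ∀ y ∈ S, f xstar ≤ f y) (hx : x ∈ S) :
    γ * μs / 4 * ‖x - xstar‖ ^ 2 ≤ f x - f xstar := by
  set d := x - xstar
  set c : ℝ → E := fun t => xstar + t • d
  have hc : ∀ t, HasDerivAt c d t := fun t => by
    have := ((hasDerivAt_id' t).smul_const d).const_add xstar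
    rwa [one_smul] at this
  have hfc : ∀ t, HasDerivAt (f ∘ c) ⟪f' (c t), d⟫ t := fun t => by
    simpa only [InnerProductSpace.toDual_apply_apply] using
      (hgrad (c t)).hasFDerivAt.comp_hasDerivAt t (hc t)
  have hcS : ∀ t ∈ Ioo (0 : ℝ) 1, c t ∈ S := fun t ht => by
    convert hS hx (sub_nonneg.2 ht.2.le) ht.1.le (sub_add_cancel 1 t) using 1
    simp only [c, d]
    module
  have hbound : ∀ t ∈ Ioo (0 : ℝ) 1, γ * μs / 2 * ‖d‖ ^ 2 * t ≤ ⟪f' (c t), d⟫ := by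
    intro t ht
    have hle := h.le_inner hγ (hcS t ht)
    have hgap := mul_nonneg hγ.le (sub_nonneg.2 (hmin _ (hcS t ht)))
    simp only [c, add_sub_cancel_left, norm_smul, real_inner_smul_right, Real.norm_eq_abs,
      abs_of_pos ht.1] at hle
    nlinarith [ht.1]
  have := half_le_sub_of_mul_le_deriv (fun t _ => (hfc t).continuousAt.continuousWithinAt)
    (fun t _ => hfc t) hbound
  simp only [Function.comp_apply, c, zero_smul, add_zero, one_smul, d, add_sub_cancel] at this
  linarith

end IsQuasarConvexOn

theorem starConvex_of_segment_mem {S : Set E} {xstar : E}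
    (h : ∀ x ∈ S, ∀ t ∈ Icc (0 : ℝ) 1, t • x + (1 - t) • xstar ∈ S) : StarConvex ℝ xstar S := by
  intro x hx a b ha hb hab
  obtain rfl : a = 1 - b := by linarith
  rw [add_comm]
  exact h x hx b ⟨hb, by linarith⟩

theorem stmt_15_general (n : ℕ)
    (f : EuclideanSpace ℝ (Fin n) → ℝ)
    (f' : EuclideanSpace ℝ (Fin n) → EuclideanSpace ℝ (Fin n))
    (hgrad : ∀ x, HasGradientAt f (f' x) x)
    (xstar : EuclideanSpace ℝ (Fin n)) (hmin : ∀ z, f xstar ≤ f z)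
    (x1 : EuclideanSpace ℝ (Fin n))
    (hstarconv : ∀ x, f x ≤ f x1 → ∀ lam ∈ Icc (0 : ℝ) 1,
      f (lam • x + (1 - lam) • xstar) ≤ f x1)
    (γ μs : ℝ) (hγ : γ ∈ Ioc (0 : ℝ) 1)
    (hqsc : ∀ x, f x ≤ f x1 →
      f x + (1 / γ) * ⟪f' x, xstar - x⟫ + μs / 2 * ‖xstar - x‖ ^ 2 ≤ f xstar) :
    ∀ x, f x ≤ f x1 →
      (μs * γ / 2 + μs * γ ^ 2 / 4) * ‖x - xstar‖ ^ 2 ≤ ⟪f' x, x - xstar⟫ := by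
  intro x hx
  have hq : IsQuasarConvexOn f f' {y | f y ≤ f x1} xstar γ μs := hqsc
  have hgrowth := hq.quadratic_growth hγ.1 (starConvex_of_segment_mem hstarconv) hgrad
    (fun y _ => hmin y) hx
  have hinner := hq.le_inner hγ.1 hx
  nlinarith [mul_le_mul_of_nonneg_left hgrowth hγ.1.le]

theorem stmt_15 (n : ℕ) (hn : 1 ≤ n)
    (f : EuclideanSpace ℝ (Fin n) → ℝ)
    (f' : EuclideanSpace ℝ (Fin n) → EuclideanSpace ℝ (Fin n))
    (L μ : ℝ) (hL : 0 < L) (hμ : μ ≤ 0)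
    (hgrad : ∀ x, HasGradientAt f (f' x) x)
    (hupper : ConvexOn ℝ univ (fun x => L / 2 * ‖x‖ ^ 2 - f x))
    (hlower : ConvexOn ℝ univ (fun x => f x - μ / 2 * ‖x‖ ^ 2))
    (xstar : EuclideanSpace ℝ (Fin n)) (hmin : ∀ z, f xstar ≤ f z)
    (huniq : ∀ y, (∀ z, f y ≤ f z) → y = xstar)
    (x1 : EuclideanSpace ℝ (Fin n))
    (hstarconv : ∀ x, f x ≤ f x1 → ∀ lam ∈ Icc (0 : ℝ) 1,
      f (lam • x + (1 - lam) • xstar) ≤ f x1)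
    (γ μs : ℝ) (hγ : γ ∈ Ioc (0 : ℝ) 1) (hμs : 0 ≤ μs)
    (hqsc : ∀ x, f x ≤ f x1 →
      f x + (1 / γ) * ⟪f' x, xstar - x⟫ + μs / 2 * ‖xstar - x‖ ^ 2 ≤ f xstar) :
    ∀ x, f x ≤ f x1 →
      (μs * γ / 2 + μs * γ ^ 2 / 4) * ‖x - xstar‖ ^ 2 ≤ ⟪f' x, x - xstar⟫ :=
  stmt_15_general n f f' hgrad xstar hmin x1 hstarconv γ μs hγ hqsc
end

section
/- Let n ≥ 1 and let f : ℝⁿ → ℝ be differentiable with a global minimizer x⋆ and minimum value f⋆. If f is (γ, μ_s)-quasar-convex on a set X ⊆ ℝⁿ with respect to x⋆, for some γ ∈ (0, 1] and μ_s > 0, then f satisfies the PL inequality with constant μ_p = μ_s γ² on X; that is, f(x) − f⋆ ≤ (1/(2 μ_s γ²))‖∇f(x)‖² for all x ∈ X. -/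
open Set
open scoped RealInnerProductSpace

theorem stmt_17 (n : ℕ) (hn : 1 ≤ n)
    (f : EuclideanSpace ℝ (Fin n) → ℝ)
    (f' : EuclideanSpace ℝ (Fin n) → EuclideanSpace ℝ (Fin n))
    (hgrad : ∀ x, HasGradientAt f (f' x) x)
    (xstar : EuclideanSpace ℝ (Fin n)) (hmin : ∀ z, f xstar ≤ f z)
    (X : Set (EuclideanSpace ℝ (Fin n)))
    (γ μs : ℝ) (hγ : γ ∈ Ioc (0 : ℝ) 1) (hμs : 0 < μs)
    (hqsc : ∀ x ∈ X,
      f x + (1 / γ) * ⟪f' x, xstar - x⟫ + μs / 2 * ‖xstar - x‖ ^ 2 ≤ f xstar) :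
    ∀ x ∈ X, f x - f xstar ≤ 1 / (2 * μs * γ ^ 2) * ‖f' x‖ ^ 2 := by
  intro x hx
  have h := hqsc x hx
  have hγ0 : 0 < γ := hγ.1
  have hcs : -⟪f' x, xstar - x⟫ ≤ ‖f' x‖ * ‖xstar - x‖ := by
    have := abs_real_inner_le_norm (f' x) (xstar - x)
    cases abs_cases ⟪f' x, xstar - x⟫ with
    | inl h' => nlinarith [norm_nonneg (f' x), norm_nonneg (xstar - x)]
    | inr h' => linarith
  have h' : γ * f x + ⟪f' x, xstar - x⟫ + γ * (μs / 2 * ‖xstar - x‖ ^ 2)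
      ≤ γ * f xstar := by
    have h2 := mul_le_mul_of_nonneg_left h hγ0.le
    have h3 : γ * (1 / γ * ⟪f' x, xstar - x⟫) = ⟪f' x, xstar - x⟫ := by
      field_simp
    nlinarith [h2, h3]
  rw [show (1:ℝ) / (2 * μs * γ ^ 2) * ‖f' x‖ ^ 2 = ‖f' x‖ ^ 2 / (2 * μs * γ ^ 2) by ring,
    le_div_iff₀ (by positivity)]
  nlinarith [sq_nonneg (‖f' x‖ - μs * γ * ‖xstar - x‖), mul_pos hμs hγ0,
    norm_nonneg (f' x), norm_nonneg (xstar - x)]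
end

section
/- Let n ≥ 1, L > 0, μ ≤ 0, and let f : ℝⁿ → ℝ belong to F_{μ,L}. Let x⋆ be the unique global minimizer of f, with f⋆ = f(x⋆), let x¹ ∈ ℝⁿ, and suppose the sublevel set X = {x : f(x) ≤ f(x¹)} is star convex at x⋆. If f is (γ, μ_s)-quasar-convex on X with respect to x⋆, for some γ ∈ (0, 1] and μ_s ≥ 0, then f(x) − f⋆ ≥ (γ μ_s/4) ‖x − x⋆‖² for every x ∈ X. -/
/-!
Along the ray `g t = f (x⋆ + t • (x - x⋆))`, quasar-convexity at the point `x⋆ + t • (x - x⋆)`,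
which lies in the star-convex sublevel set, combined with `f⋆ ≤ g t` gives the slope bound
`g' t ≥ (γ μs / 2) ‖x - x⋆‖² t`; integrating it over `[0, 1]` yields the quadratic growth.
-/

open Set
open scoped RealInnerProductSpace

theorem div_two_le_sub_of_mul_le_hasDerivAt {g g' : ℝ → ℝ} {a : ℝ}
    (hcont : ContinuousOn g (Icc 0 1)) (hderiv : ∀ t ∈ Ioo 0 1, HasDerivAt g (g' t) t)
    (hbound : ∀ t ∈ Ioo 0 1, a * t ≤ g' t) : a / 2 ≤ g 1 - g 0 := by
  have hmono : MonotoneOn (fun t => g t - a / 2 * t ^ 2) (Icc 0 1) := by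
    refine monotoneOn_of_hasDerivWithinAt_nonneg (f' := fun t => g' t - a * t) (convex_Icc 0 1)
      (hcont.sub (by fun_prop)) (fun t ht => ?_) (fun t ht => ?_) <;> rw [interior_Icc] at ht
    · have hsq : HasDerivAt (fun t : ℝ => a / 2 * t ^ 2) (a * t) t :=
        ((hasDerivAt_pow 2 t).const_mul (a / 2)).congr_deriv (by norm_num; ring)
      exact ((hderiv t ht).sub hsq).hasDerivWithinAt
    · exact sub_nonneg.2 (hbound t ht)
  have := hmono (left_mem_Icc.2 zero_le_one) (right_mem_Icc.2 zero_le_one) zero_le_one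
  linarith

theorem HasGradientAt.hasDerivAt_comp_add_smul {E : Type*} [NormedAddCommGroup E]
    [InnerProductSpace ℝ E] [CompleteSpace E] {f : E → ℝ} {g a v : E} {t : ℝ}
    (hf : HasGradientAt f g (a + t • v)) :
    HasDerivAt (fun s : ℝ => f (a + s • v)) ⟪g, v⟫ t := by
  have hline : HasDerivAt (fun s : ℝ => a + s • v) v t := by
    simpa using ((hasDerivAt_id t).smul_const v).const_add a
  have h := hf.hasFDerivAt.comp_hasDerivAt t hline
  simp only [InnerProductSpace.toDual_apply_apply] at h
  exact h

theorem mul_le_inner_of_quasarConvex_along_ray {E : Type*} [NormedAddCommGroup E]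
    [InnerProductSpace ℝ E] {f : E → ℝ} {g xstar v : E} {γ μs t : ℝ} (hγ : 0 < γ) (ht : 0 < t)
    (hmin : f xstar ≤ f (xstar + t • v))
    (hqsc : f (xstar + t • v) + (1 / γ) * ⟪g, xstar - (xstar + t • v)⟫
      + μs / 2 * ‖xstar - (xstar + t • v)‖ ^ 2 ≤ f xstar) :
    γ * μs / 2 * ‖v‖ ^ 2 * t ≤ ⟪g, v⟫ := by
  have hdir : xstar - (xstar + t • v) = (-t) • v := by module
  rw [hdir, real_inner_smul_right, norm_smul, Real.norm_eq_abs, abs_neg, abs_of_pos ht] at hqsc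
  have hscaled : t * (γ * μs / 2 * ‖v‖ ^ 2 * t) ≤ t * ⟪g, v⟫ := by
    have := mul_le_mul_of_nonneg_left (hqsc.trans hmin) hγ.le
    field_simp at this
    nlinarith
  exact le_of_mul_le_mul_left hscaled ht

theorem stmt_18_general (n : ℕ)
    (f : EuclideanSpace ℝ (Fin n) → ℝ)
    (f' : EuclideanSpace ℝ (Fin n) → EuclideanSpace ℝ (Fin n))
    (hgrad : ∀ x, HasGradientAt f (f' x) x)
    (xstar : EuclideanSpace ℝ (Fin n)) (hmin : ∀ z, f xstar ≤ f z)
    (x1 : EuclideanSpace ℝ (Fin n))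
    (hstarconv : ∀ x, f x ≤ f x1 → ∀ lam ∈ Icc (0 : ℝ) 1,
      f (lam • x + (1 - lam) • xstar) ≤ f x1)
    (γ μs : ℝ) (hγ : γ ∈ Ioc (0 : ℝ) 1)
    (hqsc : ∀ x, f x ≤ f x1 →
      f x + (1 / γ) * ⟪f' x, xstar - x⟫ + μs / 2 * ‖xstar - x‖ ^ 2 ≤ f xstar) :
    ∀ x, f x ≤ f x1 → γ * μs / 4 * ‖x - xstar‖ ^ 2 ≤ f x - f xstar := by
  intro x hx
  have hray : ∀ t ∈ Icc (0 : ℝ) 1, f (xstar + t • (x - xstar)) ≤ f x1 := fun t ht => by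
    convert hstarconv x hx t ht using 2
    module
  have hderiv (t : ℝ) := (hgrad (xstar + t • (x - xstar))).hasDerivAt_comp_add_smul
  have hgrowth := div_two_le_sub_of_mul_le_hasDerivAt (a := γ * μs / 2 * ‖x - xstar‖ ^ 2)
    (fun t _ => (hderiv t).continuousAt.continuousWithinAt) (fun t _ => hderiv t)
    (fun t ht => mul_le_inner_of_quasarConvex_along_ray hγ.1 ht.1 (hmin _)
      (hqsc _ (hray t (Ioo_subset_Icc_self ht))))
  simp only [one_smul, zero_smul, add_zero, add_sub_cancel] at hgrowth
  linarith

theorem stmt_18 (n : ℕ) (hn : 1 ≤ n)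
    (f : EuclideanSpace ℝ (Fin n) → ℝ)
    (f' : EuclideanSpace ℝ (Fin n) → EuclideanSpace ℝ (Fin n))
    (L μ : ℝ) (hL : 0 < L) (hμ : μ ≤ 0)
    (hgrad : ∀ x, HasGradientAt f (f' x) x)
    (hupper : ConvexOn ℝ univ (fun x => L / 2 * ‖x‖ ^ 2 - f x))
    (hlower : ConvexOn ℝ univ (fun x => f x - μ / 2 * ‖x‖ ^ 2))
    (xstar : EuclideanSpace ℝ (Fin n)) (hmin : ∀ z, f xstar ≤ f z)
    (huniq : ∀ y, (∀ z, f y ≤ f z) → y = xstar)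
    (x1 : EuclideanSpace ℝ (Fin n))
    (hstarconv : ∀ x, f x ≤ f x1 → ∀ lam ∈ Icc (0 : ℝ) 1,
      f (lam • x + (1 - lam) • xstar) ≤ f x1)
    (γ μs : ℝ) (hγ : γ ∈ Ioc (0 : ℝ) 1) (hμs : 0 ≤ μs)
    (hqsc : ∀ x, f x ≤ f x1 →
      f x + (1 / γ) * ⟪f' x, xstar - x⟫ + μs / 2 * ‖xstar - x‖ ^ 2 ≤ f xstar) :
    ∀ x, f x ≤ f x1 → γ * μs / 4 * ‖x - xstar‖ ^ 2 ≤ f x - f xstar :=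
  stmt_18_general n f f' hgrad xstar hmin x1 hstarconv γ μs hγ hqsc
end
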